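/- arXiv:2512.20041 — 6 statements merged into one kernel-verified Lean document; each statement's English description precedes it below -/
import Mathlib

section
/- Let c > 0, and for b ∈ ℝ let h(·, b) denote the density on (0,∞) given by h(u, b) = (c/√(2π)) e^{c|b|} u^{−3/2} exp(−b²u/2 − c²/(2u)) (the InverseGaussian(c/|b|, c²) density). If b, b' ∈ ℝ with |b| ≥ |b'|, then the Kullback–Leibler divergence satisfies KL(h(·,b) ‖ h(·,b')) ≤ c |b − b'|. -/
/-!
Completing the square, `exp (c a) exp (-a² u / 2 - c² / (2 u)) = exp (-(a √u - c / √u)² / 2)`, and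
the substitution `x = a √u - c / √u`, a bijection of `(0, ∞)` onto `ℝ` with
`dx = (a u + c) / (2 u √u) du`, turn `∫ (a u + c) p` and `∫ (a u - c) p`, for the inverse Gaussian
density `p`, into `∫ exp (-x² / 2)` and the integral of the odd function
`x / √(x² + 4ac) · exp (-x² / 2)`. Hence `a ∫ u p + c ∫ p = 2c` and `a ∫ u p = c ∫ p`, i.e.
`∫ p = 1` and `∫ u p = c / a`. Since `log (p_a / p_a')` is affine in `u`, the divergence is
`c (a - a')² / (2a) ≤ c (a - a') ≤ c |b - b'|`, where `a = |b|` and `a' = |b'|`.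
-/

open MeasureTheory Real Set

/-- The inverse Gaussian density with mean `c / a` and shape `c²`. -/
noncomputable def invGaussianPDF (c a u : ℝ) : ℝ :=
  c / √(2 * π) * exp (c * a) * u ^ (-(3:ℝ)/2) * exp (-(a ^ 2 * u) / 2 - c ^ 2 / (2 * u))

section SqrtSubDivSqrt

lemma hasDerivAt_sqrt_sub_div_sqrt (a c : ℝ) {x : ℝ} (hx : 0 < x) :
    HasDerivAt (fun u => a * √u - c / √u) ((a * x + c) / (2 * x * √x)) x := by
  have hsx : √x ≠ 0 := (sqrt_pos.mpr hx).ne'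
  refine (((hasDerivAt_sqrt hx.ne').const_mul a).sub
    ((hasDerivAt_const x c).div (hasDerivAt_sqrt hx.ne') hsx)).congr_deriv ?_
  field_simp
  rw [sq_sqrt hx.le]
  ring

variable {a c : ℝ}

lemma strictMonoOn_sqrt_sub_div_sqrt (ha : 0 < a) (hc : 0 ≤ c) :
    StrictMonoOn (fun u => a * √u - c / √u) (Ioi 0) := by
  intro x hx y _ hxy
  have hsx : 0 < √x := sqrt_pos.mpr hx
  have hsxy : √x < √y := sqrt_lt_sqrt hx.le hxy
  have : c / √y ≤ c / √x := div_le_div_of_nonneg_left hc hsx hsxy.le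
  dsimp only
  nlinarith

lemma image_sqrt_sub_div_sqrt_Ioi (ha : 0 < a) (hc : 0 < c) :
    (fun u => a * √u - c / √u) '' Ioi 0 = univ := by
  refine eq_univ_of_forall fun y => ?_
  -- `t = √u` is the positive root of `a t² - y t - c`
  set s := √(y ^ 2 + 4 * a * c)
  have hs : s ^ 2 = y ^ 2 + 4 * a * c := sq_sqrt (by positivity)
  have hys : 0 < y + s := by
    nlinarith [sqrt_nonneg (y ^ 2 + 4 * a * c), mul_pos ha hc, abs_le_sqrt (le_refl (y ^ 2))]
  set t := (y + s) / (2 * a)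
  have ht : 0 < t := by positivity
  refine ⟨t ^ 2, mem_Ioi.mpr (by positivity), ?_⟩
  simp only [sqrt_sq ht.le]
  field_simp
  simp only [t]
  field_simp
  nlinarith [hs]

variable {E : Type*} [NormedAddCommGroup E] [NormedSpace ℝ E]

lemma abs_deriv_sqrt_sub_div_sqrt (ha : 0 < a) (hc : 0 ≤ c) {u : ℝ} (hu : 0 < u) :
    |(a * u + c) / (2 * u * √u)| = (a * u + c) / (2 * u * √u) :=
  abs_of_pos (by have := sqrt_pos.mpr hu; positivity)

theorem integrableOn_comp_sqrt_sub_div_sqrt_iff (ha : 0 < a) (hc : 0 < c) (g : ℝ → E) :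
    IntegrableOn (fun u => ((a * u + c) / (2 * u * √u)) • g (a * √u - c / √u)) (Ioi 0) ↔
      Integrable g := by
  have := integrableOn_image_iff_integrableOn_abs_deriv_smul measurableSet_Ioi
    (fun x hx => (hasDerivAt_sqrt_sub_div_sqrt a c hx).hasDerivWithinAt)
    (strictMonoOn_sqrt_sub_div_sqrt ha hc.le).injOn g
  rw [image_sqrt_sub_div_sqrt_Ioi ha hc, integrableOn_univ] at this
  rw [this]
  exact integrableOn_congr_fun (fun u hu => by rw [abs_deriv_sqrt_sub_div_sqrt ha hc.le hu])
    measurableSet_Ioi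

theorem integral_comp_sqrt_sub_div_sqrt (ha : 0 < a) (hc : 0 < c) (g : ℝ → E) :
    ∫ u in Ioi 0, ((a * u + c) / (2 * u * √u)) • g (a * √u - c / √u) = ∫ x, g x := by
  have := integral_image_eq_integral_abs_deriv_smul measurableSet_Ioi
    (fun x hx => (hasDerivAt_sqrt_sub_div_sqrt a c hx).hasDerivWithinAt)
    (strictMonoOn_sqrt_sub_div_sqrt ha hc.le).injOn g
  rw [image_sqrt_sub_div_sqrt_Ioi ha hc, setIntegral_univ] at this
  rw [this]
  exact setIntegral_congr_fun measurableSet_Ioi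
    (fun u hu => by rw [abs_deriv_sqrt_sub_div_sqrt ha hc.le hu])

end SqrtSubDivSqrt

lemma integrable_exp_neg_sq_div_two : Integrable fun x : ℝ => exp (-x ^ 2 / 2) := by
  simpa [neg_div, div_eq_inv_mul] using integrable_exp_neg_mul_sq (by norm_num : (0:ℝ) < 1 / 2)

lemma integral_exp_neg_sq_div_two : ∫ x : ℝ, exp (-x ^ 2 / 2) = √(2 * π) := by
  have := integral_gaussian (1 / 2)
  rw [div_div_eq_mul_div, div_one, mul_comm] at this
  simpa [neg_div, div_eq_inv_mul] using this

lemma integral_eq_zero_of_odd {g : ℝ → ℝ} (hg : Function.Odd g) : ∫ x, g x = 0 := by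
  have := integral_neg_eq_self g volume
  simp only [hg _, integral_neg] at this
  linarith

lemma integrable_div_sqrt_sq_add_mul_exp_neg_sq_div_two {k : ℝ} (hk : 0 ≤ k) :
    Integrable fun x : ℝ => x / √(x ^ 2 + k) * exp (-x ^ 2 / 2) := by
  have hmeas : Measurable fun x : ℝ => x / √(x ^ 2 + k) := by fun_prop
  refine integrable_exp_neg_sq_div_two.bdd_mul (c := 1) hmeas.aestronglyMeasurable
    (.of_forall fun x => ?_)
  rw [norm_div, norm_of_nonneg (sqrt_nonneg _)]
  exact div_le_one_of_le₀ (abs_le_sqrt (by linarith)) (sqrt_nonneg _)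

section Density

variable {a c u : ℝ}

lemma rpow_neg_three_halves (hu : 0 < u) : u ^ (-(3:ℝ)/2) = (u * √u)⁻¹ := by
  rw [show -(3:ℝ)/2 = -(1 + 1/2) by norm_num, rpow_neg hu.le, rpow_add hu, rpow_one,
    ← sqrt_eq_rpow]

lemma invGaussianPDF_eq (hu : 0 < u) :
    invGaussianPDF c a u = c / √(2 * π) * exp (-(a * √u - c / √u) ^ 2 / 2) / (u * √u) := by
  have hsu : √u ≠ 0 := (sqrt_pos.mpr hu).ne'
  have hexp : c * a + (-(a ^ 2 * u) / 2 - c ^ 2 / (2 * u)) = -(a * √u - c / √u) ^ 2 / 2 := by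
    nth_rewrite 1 [← sq_sqrt hu.le]; nth_rewrite 2 [← sq_sqrt hu.le]
    field_simp
    ring
  rw [invGaussianPDF, rpow_neg_three_halves hu, ← hexp, exp_add]
  ring

lemma log_invGaussianPDF_div (hc : c ≠ 0) (hu : 0 < u) (a a' : ℝ) :
    log (invGaussianPDF c a u / invGaussianPDF c a' u)
      = c * (a - a') - (a ^ 2 - a' ^ 2) / 2 * u := by
  have hK : c / √(2 * π) * u ^ (-(3:ℝ)/2) ≠ 0 := by
    have := rpow_pos_of_pos hu (-(3:ℝ)/2)
    have := sqrt_pos.mpr (by positivity : (0:ℝ) < 2 * π)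
    positivity
  have hfactor : ∀ a, invGaussianPDF c a u
      = c / √(2 * π) * u ^ (-(3:ℝ)/2) * exp (c * a - a ^ 2 * u / 2 - c ^ 2 / (2 * u)) := by
    intro a
    rw [invGaussianPDF, show c * a - a ^ 2 * u / 2 - c ^ 2 / (2 * u)
      = c * a + (-(a ^ 2 * u) / 2 - c ^ 2 / (2 * u)) by ring, exp_add]
    ring
  rw [hfactor, hfactor, mul_div_mul_left _ _ hK, ← exp_sub, log_exp]
  ring

lemma add_mul_invGaussianPDF_eq (hu : 0 < u) :
    (a * u + c) * invGaussianPDF c a u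
      = 2 * c / √(2 * π) * ((a * u + c) / (2 * u * √u) * exp (-(a * √u - c / √u) ^ 2 / 2)) := by
  have hsu : √u ≠ 0 := (sqrt_pos.mpr hu).ne'
  rw [invGaussianPDF_eq hu]
  field_simp

lemma sub_mul_invGaussianPDF_eq (ha : 0 ≤ a) (hc : 0 < c) (hu : 0 < u) :
    (a * u - c) * invGaussianPDF c a u
      = 2 * c / √(2 * π) * ((a * u + c) / (2 * u * √u) *
        ((a * √u - c / √u) / √((a * √u - c / √u) ^ 2 + 4 * a * c) *
          exp (-(a * √u - c / √u) ^ 2 / 2))) := by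
  have hsu : 0 < √u := sqrt_pos.mpr hu
  have hsqrt : √((a * √u - c / √u) ^ 2 + 4 * a * c) = (a * u + c) / √u := by
    rw [show (a * √u - c / √u) ^ 2 + 4 * a * c = ((a * u + c) / √u) ^ 2 by
      field_simp; rw [sq_sqrt hu.le]; ring]
    exact sqrt_sq (by positivity)
  rw [hsqrt, invGaussianPDF_eq hu]
  field_simp
  rw [sq_sqrt hu.le]

end Density

section Moments

variable {a c : ℝ}

lemma integrableOn_add_mul_invGaussianPDF (ha : 0 < a) (hc : 0 < c) :
    IntegrableOn (fun u => (a * u + c) * invGaussianPDF c a u) (Ioi 0) := by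
  refine (integrableOn_congr_fun (fun u hu => add_mul_invGaussianPDF_eq hu)
    measurableSet_Ioi).mpr (Integrable.const_mul ?_ _)
  exact (integrableOn_comp_sqrt_sub_div_sqrt_iff ha hc _).mpr integrable_exp_neg_sq_div_two

lemma integral_add_mul_invGaussianPDF (ha : 0 < a) (hc : 0 < c) :
    ∫ u in Ioi 0, (a * u + c) * invGaussianPDF c a u = 2 * c := by
  have hsπ : √(2 * π) ≠ 0 := (sqrt_pos.mpr (by positivity)).ne'
  have hgauss := integral_comp_sqrt_sub_div_sqrt ha hc fun x => exp (-x ^ 2 / 2)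
  simp only [smul_eq_mul, integral_exp_neg_sq_div_two] at hgauss
  rw [setIntegral_congr_fun measurableSet_Ioi fun u hu => add_mul_invGaussianPDF_eq hu,
    integral_const_mul, hgauss]
  field_simp

lemma integrableOn_sub_mul_invGaussianPDF (ha : 0 < a) (hc : 0 < c) :
    IntegrableOn (fun u => (a * u - c) * invGaussianPDF c a u) (Ioi 0) := by
  refine (integrableOn_congr_fun (fun u hu => sub_mul_invGaussianPDF_eq ha.le hc hu)
    measurableSet_Ioi).mpr (Integrable.const_mul ?_ _)
  exact (integrableOn_comp_sqrt_sub_div_sqrt_iff ha hc _).mpr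
    (integrable_div_sqrt_sq_add_mul_exp_neg_sq_div_two (by positivity))

lemma integral_sub_mul_invGaussianPDF (ha : 0 < a) (hc : 0 < c) :
    ∫ u in Ioi 0, (a * u - c) * invGaussianPDF c a u = 0 := by
  have hodd := integral_comp_sqrt_sub_div_sqrt ha hc
    fun x => x / √(x ^ 2 + 4 * a * c) * exp (-x ^ 2 / 2)
  have hzero : ∫ x, x / √(x ^ 2 + 4 * a * c) * exp (-x ^ 2 / 2) = 0 :=
    integral_eq_zero_of_odd fun x => by simp only [neg_sq, neg_div, neg_mul]
  simp only [smul_eq_mul, hzero] at hodd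
  rw [setIntegral_congr_fun measurableSet_Ioi fun u hu => sub_mul_invGaussianPDF_eq ha.le hc hu,
    integral_const_mul, hodd, mul_zero]

lemma invGaussianPDF_eq_sub (hc : c ≠ 0) :
    invGaussianPDF c a = fun u =>
      (2 * c)⁻¹ * ((a * u + c) * invGaussianPDF c a u - (a * u - c) * invGaussianPDF c a u) := by
  funext u
  field_simp
  ring

lemma mul_invGaussianPDF_eq_add (ha : a ≠ 0) :
    (fun u => u * invGaussianPDF c a u) = fun u =>
      (2 * a)⁻¹ * ((a * u + c) * invGaussianPDF c a u + (a * u - c) * invGaussianPDF c a u) := by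
  funext u
  field_simp
  ring

lemma integrableOn_invGaussianPDF (ha : 0 < a) (hc : 0 < c) :
    IntegrableOn (invGaussianPDF c a) (Ioi 0) := by
  rw [invGaussianPDF_eq_sub hc.ne']
  exact ((integrableOn_add_mul_invGaussianPDF ha hc).sub
    (integrableOn_sub_mul_invGaussianPDF ha hc)).const_mul _

lemma integral_invGaussianPDF (ha : 0 < a) (hc : 0 < c) :
    ∫ u in Ioi 0, invGaussianPDF c a u = 1 := by
  rw [invGaussianPDF_eq_sub hc.ne', integral_const_mul,
    integral_sub (integrableOn_add_mul_invGaussianPDF ha hc)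
      (integrableOn_sub_mul_invGaussianPDF ha hc),
    integral_add_mul_invGaussianPDF ha hc, integral_sub_mul_invGaussianPDF ha hc]
  field_simp
  ring

lemma integrableOn_mul_invGaussianPDF (ha : 0 < a) (hc : 0 < c) :
    IntegrableOn (fun u => u * invGaussianPDF c a u) (Ioi 0) := by
  rw [mul_invGaussianPDF_eq_add ha.ne']
  exact ((integrableOn_add_mul_invGaussianPDF ha hc).add
    (integrableOn_sub_mul_invGaussianPDF ha hc)).const_mul _

lemma integral_mul_invGaussianPDF (ha : 0 < a) (hc : 0 < c) :
    ∫ u in Ioi 0, u * invGaussianPDF c a u = c / a := by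
  rw [mul_invGaussianPDF_eq_add ha.ne', integral_const_mul,
    integral_add (integrableOn_add_mul_invGaussianPDF ha hc)
      (integrableOn_sub_mul_invGaussianPDF ha hc),
    integral_add_mul_invGaussianPDF ha hc, integral_sub_mul_invGaussianPDF ha hc]
  field_simp
  ring

end Moments

theorem integral_invGaussianPDF_mul_log_div {a c : ℝ} (ha : 0 < a) (hc : 0 < c) (a' : ℝ) :
    ∫ u in Ioi 0, invGaussianPDF c a u * log (invGaussianPDF c a u / invGaussianPDF c a' u)
      = c * (a - a') ^ 2 / (2 * a) := by
  have hlog : EqOn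
      (fun u => invGaussianPDF c a u * log (invGaussianPDF c a u / invGaussianPDF c a' u))
      (fun u => c * (a - a') * invGaussianPDF c a u
        - (a ^ 2 - a' ^ 2) / 2 * (u * invGaussianPDF c a u)) (Ioi 0) := fun u hu => by
    simp only [log_invGaussianPDF_div hc.ne' hu]
    ring
  rw [setIntegral_congr_fun measurableSet_Ioi hlog,
    integral_sub ((integrableOn_invGaussianPDF ha hc).const_mul _)
      ((integrableOn_mul_invGaussianPDF ha hc).const_mul _),
    integral_const_mul, integral_const_mul, integral_invGaussianPDF ha hc,
    integral_mul_invGaussianPDF ha hc]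
  field_simp
  ring

/-- KL divergence bound between inverse Gaussian densities
`h(u, b) = (c/√(2π)) e^{c|b|} u^{-3/2} exp(-b²u/2 - c²/(2u))` on `(0,∞)`:
if `|b'| ≤ |b|` then `KL(h(·,b) ‖ h(·,b')) ≤ c |b - b'|`. -/
theorem kl_invGaussian_le {c : ℝ} (hc : 0 < c) (b b' : ℝ) (hbb : |b'| ≤ |b|)
    (h : ℝ → ℝ → ℝ)
    (hdef : ∀ β u, h u β =
      (c / Real.sqrt (2 * π)) * Real.exp (c * |β|) * u ^ (-(3:ℝ)/2)
        * Real.exp (-(β ^ 2 * u) / 2 - c ^ 2 / (2 * u))) :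
    (∫ u in Set.Ioi (0:ℝ), h u b * Real.log (h u b / h u b')) ≤ c * |b - b'| := by
  rcases (abs_nonneg b).eq_or_lt with hb | hb
  · obtain rfl : b = 0 := abs_eq_zero.mp hb.symm
    obtain rfl : b' = 0 := abs_nonpos_iff.mp (hb ▸ hbb)
    simp only [log_div_self, mul_zero, integral_zero, sub_self, abs_zero, le_refl]
  have hh : h = fun u β => invGaussianPDF c |β| u := by
    funext u β
    rw [hdef, invGaussianPDF, sq_abs]
  rw [hh, integral_invGaussianPDF_mul_log_div hb hc, div_le_iff₀ (by positivity)]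
  have hsq : (|b| - |b'|) ^ 2 ≤ |b| * |b - b'| := by
    nlinarith [abs_sub_abs_le_abs_sub b b', abs_nonneg b',
      mul_nonneg (sub_nonneg.mpr hbb) (abs_nonneg b')]
  nlinarith [mul_le_mul_of_nonneg_left hsq hc.le, abs_nonneg (b - b')]
end

section
/- Let X ∈ ℝ^{n×(1+p)} be the matrix whose i-th row is (1, x_i^⊤), and for λ ≥ 1 let X_λ ∈ ℝ^{n×(1+p)} be the matrix whose i-th row is (1, x_i^⊤/λ). Then the largest eigenvalue satisfies σ_max(X_λ^⊤ X_λ) ≤ σ_max(X^⊤X)/λ + (λ−1)n/λ ≤ σ_max(X^⊤X). -/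
/-!
Writing `v₀` for the intercept coordinate of `v`, the rescaled design matrix satisfies
`X_λ v = λ⁻¹ • X v + (1 - λ⁻¹) • v₀ • 𝟙`, so convexity of `‖·‖²` gives
`‖X_λ v‖² ≤ λ⁻¹ ‖X v‖² + (1 - λ⁻¹) n v₀² ≤ (σ_max(XᵀX) / λ + (1 - λ⁻¹) n) ‖v‖²`.
Since `σ_max(A) ≤ c` exactly when `vᵀ A v ≤ c ‖v‖²` for all `v`, this is the first inequality.
The second one reduces to `n ≤ σ_max(XᵀX)`, which is the same characterisation tested at the
intercept basis vector `e₀`, for which `X e₀ = 𝟙`.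
-/

open Matrix

open scoped MatrixOrder in
theorem Matrix.IsHermitian.iSup_eigenvalues_le_iff {m : Type*} [Fintype m] [DecidableEq m]
    [Nonempty m] {A : Matrix m m ℝ} (hA : A.IsHermitian) {c : ℝ} :
    (⨆ i, hA.eigenvalues i) ≤ c ↔ ∀ v : m → ℝ, v ⬝ᵥ A *ᵥ v ≤ c * (v ⬝ᵥ v) := by
  -- both sides say `A ≤ c • 1` in the Loewner order
  rw [ciSup_le_iff (Set.finite_range _).bddAbove, ← Set.forall_mem_range (p := (· ≤ c)),
    ← hA.spectrum_real_eq_range_eigenvalues, ← le_algebraMap_iff_spectrum_le hA.isSelfAdjoint,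
    le_iff, posSemidef_iff_dotProduct_mulVec]
  have hc : (algebraMap ℝ (Matrix m m ℝ) c - A).IsHermitian :=
    (IsSelfAdjoint.algebraMap _ (.all c)).sub hA
  rw [and_iff_right hc]
  simp only [star_trivial, Algebra.algebraMap_eq_smul_one, sub_mulVec,
    smul_mulVec, one_mulVec, dotProduct_sub, dotProduct_smul, smul_eq_mul, sub_nonneg]

theorem Matrix.dotProduct_transpose_mul_self_mulVec {m n R : Type*} [Fintype m] [Fintype n]
    [CommSemiring R] (X : Matrix m n R) (v : n → R) :
    v ⬝ᵥ (Xᵀ * X) *ᵥ v = (X *ᵥ v) ⬝ᵥ (X *ᵥ v) := by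
  rw [← mulVec_mulVec, dotProduct_mulVec, vecMul_transpose]

section OrderedField

variable {K m : Type*} [Field K] [LinearOrder K] [IsStrictOrderedRing K] [Fintype m]

theorem sq_le_dotProduct_self (v : m → K) (i : m) : v i ^ 2 ≤ v ⬝ᵥ v := by
  simpa only [dotProduct, sq] using
    Finset.single_le_sum (fun j _ => mul_self_nonneg (v j)) (Finset.mem_univ i)

theorem dotProduct_self_convexComb_le {t : K} (ht₀ : 0 ≤ t) (ht₁ : t ≤ 1) (u w : m → K) :
    (t • u + (1 - t) • w) ⬝ᵥ (t • u + (1 - t) • w) ≤ t * (u ⬝ᵥ u) + (1 - t) * (w ⬝ᵥ w) := by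
  simp only [dotProduct, Finset.mul_sum, ← Finset.sum_add_distrib]
  gcongr with i
  simp only [Pi.add_apply, Pi.smul_apply, smul_eq_mul]
  nlinarith [mul_nonneg (mul_nonneg ht₀ (sub_nonneg.2 ht₁)) (sq_nonneg (u i - w i))]

end OrderedField

section DesignMatrix

variable {n p : ℕ}

def designMatrix {R : Type*} [One R] (x : Fin n → Fin p → R) : Matrix (Fin n) (Fin (1 + p)) R :=
  Matrix.of fun i => Fin.append (fun _ : Fin 1 => 1) (x i)

theorem designMatrix_mulVec_apply {R : Type*} [Semiring R] (x : Fin n → Fin p → R)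
    (v : Fin (1 + p) → R) (i : Fin n) :
    (designMatrix x *ᵥ v) i = v (Fin.castAdd p 0) + x i ⬝ᵥ fun j => v (Fin.natAdd 1 j) := by
  simp [designMatrix, mulVec, dotProduct, Fin.sum_univ_add]

theorem designMatrix_mulVec_single_castAdd_zero {R : Type*} [Semiring R] (x : Fin n → Fin p → R) :
    designMatrix x *ᵥ Pi.single (Fin.castAdd p 0) 1 = 1 := by
  ext i
  simp [designMatrix]

theorem designMatrix_div_mulVec {K : Type*} [Field K] (x : Fin n → Fin p → K) (c : K)
    (v : Fin (1 + p) → K) :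
    designMatrix (fun i j => x i j / c) *ᵥ v =
      c⁻¹ • designMatrix x *ᵥ v + (1 - c⁻¹) • v (Fin.castAdd p 0) • 1 := by
  ext i
  simp only [designMatrix_mulVec_apply, Pi.add_apply, Pi.smul_apply, Pi.one_apply, smul_eq_mul,
    dotProduct, div_eq_inv_mul, mul_assoc, ← Finset.mul_sum]
  ring

theorem dotProduct_self_designMatrix_div_mulVec_le (x : Fin n → Fin p → ℝ) {c : ℝ} (hc : 1 ≤ c)
    (v : Fin (1 + p) → ℝ) :
    (designMatrix (fun i j => x i j / c) *ᵥ v) ⬝ᵥ (designMatrix (fun i j => x i j / c) *ᵥ v) ≤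
      c⁻¹ * ((designMatrix x *ᵥ v) ⬝ᵥ (designMatrix x *ᵥ v)) +
        (1 - c⁻¹) * (n * v (Fin.castAdd p 0) ^ 2) := by
  rw [designMatrix_div_mulVec]
  refine (dotProduct_self_convexComb_le (by positivity) (inv_le_one_of_one_le₀ hc) _ _).trans_eq ?_
  simp only [smul_dotProduct, dotProduct_smul, smul_eq_mul, one_dotProduct_one, Fintype.card_fin]
  ring

end DesignMatrix

/-- For the design matrix `X` with rows `(1, xᵢᵀ)` and the rescaled matrix `X_λ` with rows
`(1, xᵢᵀ/λ)`, when `λ ≥ 1` the largest eigenvalue satisfies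
`σ_max(X_λᵀ X_λ) ≤ σ_max(XᵀX)/λ + (λ−1)n/λ ≤ σ_max(XᵀX)`. -/
theorem sigma_max_X_lambda {n p : ℕ} {lam : ℝ} (hlam : 1 ≤ lam)
    (x : Fin n → Fin p → ℝ)
    (X Xlam : Matrix (Fin n) (Fin (1 + p)) ℝ)
    (hX : ∀ i, X i = Fin.append (fun _ : Fin 1 => (1:ℝ)) (x i))
    (hXlam : ∀ i, Xlam i = Fin.append (fun _ : Fin 1 => (1:ℝ)) (fun j => x i j / lam))
    (h1 : (Xᵀ * X).IsHermitian) (h2 : (Xlamᵀ * Xlam).IsHermitian) :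
    (⨆ i, h2.eigenvalues i) ≤ (⨆ i, h1.eigenvalues i) / lam + (lam - 1) * n / lam ∧
    (⨆ i, h1.eigenvalues i) / lam + (lam - 1) * n / lam ≤ ⨆ i, h1.eigenvalues i := by
  obtain rfl : X = designMatrix x := funext hX
  obtain rfl : Xlam = designMatrix (fun i j => x i j / lam) := funext hXlam
  set M := ⨆ i, h1.eigenvalues i
  have hM := h1.iSup_eigenvalues_le_iff.1 le_rfl
  simp only [dotProduct_transpose_mul_self_mulVec] at hM
  have hn : (n : ℝ) ≤ M := by
    simpa only [designMatrix_mulVec_single_castAdd_zero, one_dotProduct_one, Fintype.card_fin,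
      single_dotProduct, Pi.single_eq_same, mul_one] using hM (Pi.single (Fin.castAdd p 0) 1)
  refine ⟨h2.iSup_eigenvalues_le_iff.2 fun v => ?_, ?_⟩
  · rw [dotProduct_transpose_mul_self_mulVec]
    calc _ ≤ lam⁻¹ * ((designMatrix x *ᵥ v) ⬝ᵥ (designMatrix x *ᵥ v)) +
          (1 - lam⁻¹) * (n * v (Fin.castAdd p 0) ^ 2) :=
          dotProduct_self_designMatrix_div_mulVec_le x hlam v
      _ ≤ lam⁻¹ * (M * (v ⬝ᵥ v)) + (1 - lam⁻¹) * (n * (v ⬝ᵥ v)) := by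
          have hlam' : 0 ≤ 1 - lam⁻¹ := sub_nonneg.2 (inv_le_one_of_one_le₀ hlam)
          gcongr
          exacts [hM v, sq_le_dotProduct_self v _]
      _ = _ := by field_simp
  · rw [← add_div, div_le_iff₀ (by linarith)]
    linarith [mul_le_mul_of_nonneg_left hn (sub_nonneg.2 hlam)]
end

section
/- Let L > 0 and η ∈ ℝ. Then ∫_{−∞}^{∞} exp(−ηu − (L/2)u² − |u|) du ≥ min{ (√5−1)/2, (√5−1)/√L }. -/
open MeasureTheory Real Set

private lemma aux_sqrt5_lt : Real.sqrt 5 < 2.2360680 := by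
  nlinarith [Real.sq_sqrt (show (0:ℝ) ≤ 5 by norm_num), Real.sqrt_nonneg 5]

private lemma aux_one_le_sqrt5 : (1:ℝ) ≤ Real.sqrt 5 := by
  nlinarith [Real.sq_sqrt (show (0:ℝ) ≤ 5 by norm_num), Real.sqrt_nonneg 5]

private lemma aux_integrable {L : ℝ} (hL : 0 < L) (η : ℝ) :
    Integrable (fun u : ℝ => Real.exp (-η * u - L / 2 * u ^ 2 - |u|)) := by
  have hg : Integrable (fun u : ℝ => Real.exp (η ^ 2 / L) * Real.exp (-(L / 4) * u ^ 2)) :=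
    (integrable_exp_neg_mul_sq (by positivity)).const_mul _
  refine hg.mono' ?_ (Filter.Eventually.of_forall fun u => ?_)
  · exact (Continuous.rexp (by continuity)).aestronglyMeasurable
  · rw [Real.norm_eq_abs, Real.abs_exp, ← Real.exp_add, Real.exp_le_exp]
    have key : -η * u * L ≤ η ^ 2 + L ^ 2 / 4 * u ^ 2 := by nlinarith [sq_nonneg (η + L * u / 2)]
    have key2 : -η * u ≤ η ^ 2 / L + L / 4 * u ^ 2 := by
      rw [← sub_nonneg] at key ⊢
      have : η ^ 2 / L + L / 4 * u ^ 2 - -η * u = (η ^ 2 + L ^ 2 / 4 * u ^ 2 - -η * u * L) / L := by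
        field_simp
      rw [this]; positivity
    have := abs_nonneg u
    linarith

/-- numeric bound: `(√5-1)/√L ≤ √(π/(L/2))/2`. -/
private lemma aux_gauss_lb {L : ℝ} (hL : 0 < L) :
    (Real.sqrt 5 - 1) / Real.sqrt L ≤ Real.sqrt (π / (L / 2)) / 2 := by
  have hr : 0 < Real.sqrt L := Real.sqrt_pos.2 hL
  have h5l : (2.2360679:ℝ) < Real.sqrt 5 := by
    nlinarith [Real.sq_sqrt (show (0:ℝ) ≤ 5 by norm_num), Real.sqrt_nonneg 5]
  have h2pi : 2 * (Real.sqrt 5 - 1) ≤ Real.sqrt (π * 2) := by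
    rw [show (2 : ℝ) * (Real.sqrt 5 - 1) = Real.sqrt ((2 * (Real.sqrt 5 - 1))^2) from
      (Real.sqrt_sq (by nlinarith [aux_sqrt5_lt])).symm]
    apply Real.sqrt_le_sqrt
    nlinarith [Real.pi_gt_d6, aux_sqrt5_lt]
  rw [show π / (L / 2) = π * 2 / L by ring, Real.sqrt_div (by positivity) L]
  rw [div_le_div_iff₀ hr (by norm_num), div_mul_eq_mul_div, le_div_iff₀ hr]
  nlinarith

/-- the case `η ≤ -1`. -/
private lemma aux_eta_le_neg_one {L : ℝ} (hL : 0 < L) {η : ℝ} (hη : η ≤ -1) :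
    (Real.sqrt 5 - 1) / Real.sqrt L ≤ ∫ u : ℝ, Real.exp (-η * u - L / 2 * u ^ 2 - |u|) := by
  have hfi := aux_integrable hL η
  have hgauss : (∫ u in Ioi (0:ℝ), Real.exp (-(L/2) * u ^ 2)) = Real.sqrt (π / (L / 2)) / 2 :=
    integral_gaussian_Ioi (L/2)
  have step2 : (∫ u in Ioi (0:ℝ), Real.exp (-(L/2) * u ^ 2))
      ≤ ∫ u in Ioi (0:ℝ), Real.exp (-η * u - L / 2 * u ^ 2 - |u|) := by
    refine setIntegral_mono_on ((integrable_exp_neg_mul_sq (by positivity)).integrableOn)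
      hfi.integrableOn measurableSet_Ioi fun u hu => ?_
    rw [Real.exp_le_exp, abs_of_pos (mem_Ioi.1 hu)]
    nlinarith [mem_Ioi.1 hu]
  have step3 : (∫ u in Ioi (0:ℝ), Real.exp (-η * u - L / 2 * u ^ 2 - |u|))
      ≤ ∫ u : ℝ, Real.exp (-η * u - L / 2 * u ^ 2 - |u|) :=
    setIntegral_le_integral hfi (Filter.Eventually.of_forall fun u => Real.exp_nonneg _)
  linarith [aux_gauss_lb hL]

/-- the case `1 ≤ η`. -/
private lemma aux_one_le_eta {L : ℝ} (hL : 0 < L) {η : ℝ} (hη : 1 ≤ η) :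
    (Real.sqrt 5 - 1) / Real.sqrt L ≤ ∫ u : ℝ, Real.exp (-η * u - L / 2 * u ^ 2 - |u|) := by
  have hfi := aux_integrable hL η
  have hgauss : (∫ u in Ioi (0:ℝ), Real.exp (-(L/2) * u ^ 2)) = Real.sqrt (π / (L / 2)) / 2 :=
    integral_gaussian_Ioi (L/2)
  have hflip : (∫ u in Iic (0:ℝ), Real.exp (-(L/2) * u ^ 2))
      = ∫ u in Ioi (0:ℝ), Real.exp (-(L/2) * u ^ 2) := by
    have := integral_comp_neg_Iic (0:ℝ) (fun u => Real.exp (-(L/2) * u ^ 2))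
    simp only [neg_sq, neg_zero] at this
    exact this
  have step2 : (∫ u in Iic (0:ℝ), Real.exp (-(L/2) * u ^ 2))
      ≤ ∫ u in Iic (0:ℝ), Real.exp (-η * u - L / 2 * u ^ 2 - |u|) := by
    refine setIntegral_mono_on ((integrable_exp_neg_mul_sq (by positivity)).integrableOn)
      hfi.integrableOn measurableSet_Iic fun u hu => ?_
    rw [Real.exp_le_exp, abs_of_nonpos (mem_Iic.1 hu)]
    nlinarith [mem_Iic.1 hu]
  have step3 : (∫ u in Iic (0:ℝ), Real.exp (-η * u - L / 2 * u ^ 2 - |u|))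
      ≤ ∫ u : ℝ, Real.exp (-η * u - L / 2 * u ^ 2 - |u|) :=
    setIntegral_le_integral hfi (Filter.Eventually.of_forall fun u => Real.exp_nonneg _)
  linarith [aux_gauss_lb hL]

/-- main chain for the case `|η| < 1`. -/
private lemma aux_mid {L : ℝ} (hL : 0 < L) {η : ℝ} (hη : |η| < 1) :
    2 * ((1 - Real.exp (-((1 + 3 * Real.sqrt L / 4) * (3 / (2 * Real.sqrt L))))) /
        (1 + 3 * Real.sqrt L / 4))
      ≤ ∫ u : ℝ, Real.exp (-η * u - L / 2 * u ^ 2 - |u|) := by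
  have hfi := aux_integrable hL η
  set r := Real.sqrt L with hr_def
  have hr : 0 < r := Real.sqrt_pos.2 hL
  have hrL : r ^ 2 = L := Real.sq_sqrt hL.le
  set T : ℝ := 3 / (2 * r) with hT_def
  set c : ℝ := 1 + 3 * r / 4 with hc_def
  have hT : 0 < T := by positivity
  have hcpos : 0 < c := by positivity
  set h : ℝ → ℝ := fun u => Real.exp (-η * u - c * |u|) with hh_def
  have hcont : Continuous h := by
    apply Real.continuous_exp.comp
    fun_prop
  have hcont2 : Continuous fun u : ℝ => Real.exp (-η * u - L / 2 * u ^ 2 - |u|) := by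
    apply Real.continuous_exp.comp
    fun_prop
  have h9 : (∫ x in (0:ℝ)..T, 2 * Real.exp (-c * x)) = 2 * ((1 - Real.exp (-(c * T))) / c) := by
    rw [intervalIntegral.integral_const_mul]
    rw [intervalIntegral.integral_comp_mul_left Real.exp (neg_ne_zero.2 hcpos.ne')]
    rw [integral_exp, smul_eq_mul, mul_zero, Real.exp_zero, neg_mul]
    field_simp [hcpos.ne']
    ring
  have S3 : (∫ x in (0:ℝ)..T, 2 * Real.exp (-c * x))
      ≤ ∫ x in (0:ℝ)..T, (h (-x) + h x) := by
    refine intervalIntegral.integral_mono_on hT.le ?_ ?_ fun x hx => ?_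
    · exact (continuous_const.mul (Real.continuous_exp.comp (by fun_prop))).intervalIntegrable _ _
    · exact ((hcont.comp continuous_neg).add hcont).intervalIntegrable _ _
    · have hx0 : 0 ≤ x := hx.1
      simp only [hh_def]
      rw [abs_neg, abs_of_nonneg hx0, show -η * -x = η * x by ring]
      have e1 : Real.exp (η * x - c * x) = Real.exp (η * x) * Real.exp (-c * x) := by
        rw [← Real.exp_add]; ring_nf
      have e2 : Real.exp (-η * x - c * x) = Real.exp (-(η * x)) * Real.exp (-c * x) := by
        rw [← Real.exp_add]; ring_nf
      rw [e1, e2]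
      nlinarith [Real.add_one_le_exp (η * x), Real.add_one_le_exp (-(η * x)),
        Real.exp_nonneg (-c * x), Real.exp_nonneg (η * x), Real.exp_nonneg (-(η * x))]
  have S1 : (∫ x in (0:ℝ)..T, h (-x)) = ∫ x in (-T)..(0:ℝ), h x := by
    have := intervalIntegral.integral_comp_neg (a := (0:ℝ)) (b := T) h
    simpa using this
  have hneg : Continuous fun x : ℝ => h (-x) := hcont.comp continuous_neg
  have S2 : (∫ x in (0:ℝ)..T, (h (-x) + h x)) = ∫ x in (-T)..T, h x := by
    rw [intervalIntegral.integral_add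
      (hneg.intervalIntegrable _ _) (hcont.intervalIntegrable _ _), S1]
    exact intervalIntegral.integral_add_adjacent_intervals
      (hcont.intervalIntegrable _ _) (hcont.intervalIntegrable _ _)
  have S4 : (∫ x in (-T)..T, h x)
      ≤ ∫ x in (-T)..T, Real.exp (-η * x - L / 2 * x ^ 2 - |x|) := by
    refine intervalIntegral.integral_mono_on (by linarith) (hcont.intervalIntegrable _ _)
      (hcont2.intervalIntegrable _ _) fun x hx => ?_
    have habs : |x| ≤ T := abs_le.2 ⟨hx.1, hx.2⟩
    have hab2 : 2 * r * |x| ≤ 3 := by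
      rw [hT_def] at habs
      rw [← le_div_iff₀' (by positivity)]
      linarith [habs]
    simp only [hh_def]
    rw [Real.exp_le_exp]
    have key : L / 2 * x ^ 2 + |x| ≤ c * |x| := by
      have h1 : 0 ≤ r * |x| * (3 - 2 * r * |x|) :=
        mul_nonneg (mul_nonneg hr.le (abs_nonneg x)) (by linarith)
      have h2 : x ^ 2 = |x| ^ 2 := (sq_abs x).symm
      rw [hc_def]
      nlinarith [abs_nonneg x]
    linarith
  have S5 : (∫ x in (-T)..T, Real.exp (-η * x - L / 2 * x ^ 2 - |x|))
      ≤ ∫ u : ℝ, Real.exp (-η * u - L / 2 * u ^ 2 - |u|) := by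
    rw [intervalIntegral.integral_of_le (by linarith)]
    exact setIntegral_le_integral hfi (Filter.Eventually.of_forall fun u => Real.exp_nonneg _)
  calc 2 * ((1 - Real.exp (-(c * T))) / c) = ∫ x in (0:ℝ)..T, 2 * Real.exp (-c * x) := h9.symm
    _ ≤ ∫ x in (0:ℝ)..T, (h (-x) + h x) := S3
    _ = ∫ x in (-T)..T, h x := S2
    _ ≤ ∫ x in (-T)..T, Real.exp (-η * x - L / 2 * x ^ 2 - |x|) := S4
    _ ≤ _ := S5

private lemma aux_num1 (r : ℝ) (hr : 0 < r) (hr2 : r ≤ 2) :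
    (Real.sqrt 5 - 1) / 2 ≤ 2 * ((1 - Real.exp (-((1 + 3 * r / 4) * (3 / (2 * r))))) /
      (1 + 3 * r / 4)) := by
  have h5u := aux_sqrt5_lt
  have h5l := aux_one_le_sqrt5
  have hcpos : (0:ℝ) < 1 + 3 * r / 4 := by positivity
  have hcT : (15/8 : ℝ) ≤ (1 + 3 * r / 4) * (3 / (2 * r)) := by
    rw [show (1 + 3 * r / 4) * (3 / (2 * r)) = 3 / (2 * r) + 9/8 by field_simp; ring]
    have : (3:ℝ)/4 ≤ 3 / (2 * r) := by
      rw [div_le_div_iff₀ (by norm_num) (by positivity)]; nlinarith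
    linarith
  have hE15 : Real.exp (-(15/8:ℝ)) ≤ 0.1553 := by
    have h := Real.sum_le_exp_of_nonneg (show (0:ℝ) ≤ 15/8 by norm_num) 6
    rw [Real.exp_neg]
    norm_num [Finset.sum_range_succ, Nat.factorial] at h ⊢
    rw [inv_le_comm₀ (by positivity) (by norm_num)]; linarith
  have hE : Real.exp (-((1 + 3 * r / 4) * (3 / (2 * r)))) ≤ 0.1553 :=
    le_trans (Real.exp_le_exp.2 (by linarith)) hE15
  rw [show 2 * ((1 - Real.exp (-((1 + 3 * r / 4) * (3 / (2 * r))))) / (1 + 3 * r / 4))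
      = (2 * (1 - Real.exp (-((1 + 3 * r / 4) * (3 / (2 * r)))))) / (1 + 3 * r / 4) by ring]
  rw [div_le_div_iff₀ (by norm_num) hcpos]
  nlinarith [Real.exp_nonneg (-((1 + 3 * r / 4) * (3 / (2 * r))))]

private lemma aux_num2 (r : ℝ) (hr : 0 < r) (hr2 : 2 < r) :
    (Real.sqrt 5 - 1) / r ≤ 2 * ((1 - Real.exp (-((1 + 3 * r / 4) * (3 / (2 * r))))) /
      (1 + 3 * r / 4)) := by
  have h5u := aux_sqrt5_lt
  have h5l := aux_one_le_sqrt5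
  have hcpos : (0:ℝ) < 1 + 3 * r / 4 := by positivity
  have hsplit : Real.exp (-((1 + 3 * r / 4) * (3 / (2 * r))))
      = Real.exp (-(9/8)) * Real.exp (-(3 / (2 * r))) := by
    rw [← Real.exp_add]; congr 1; field_simp; ring
  have hE0 : Real.exp (-(9/8:ℝ)) ≤ 0.32501 := by
    have h := Real.sum_le_exp_of_nonneg (show (0:ℝ) ≤ 9/8 by norm_num) 6
    rw [Real.exp_neg]
    norm_num [Finset.sum_range_succ, Nat.factorial] at h ⊢
    rw [inv_le_comm₀ (by positivity) (by norm_num)]; linarith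
  have he1 : Real.exp (-(3 / (2 * r))) * (3 / (2 * r) + 1) ≤ 1 := by
    have h2 := mul_le_mul_of_nonneg_left (Real.add_one_le_exp (3 / (2 * r)))
      (Real.exp_nonneg (-(3 / (2 * r))))
    rwa [← Real.exp_add, neg_add_cancel, Real.exp_zero] at h2
  have he1' : Real.exp (-(3 / (2 * r))) * (3 + 2 * r) ≤ 2 * r := by
    have h2 := mul_le_mul_of_nonneg_right he1 (show (0:ℝ) ≤ 2 * r by positivity)
    rw [one_mul] at h2
    calc Real.exp (-(3 / (2 * r))) * (3 + 2 * r)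
        = Real.exp (-(3 / (2 * r))) * (3 / (2 * r) + 1) * (2 * r) := by field_simp
      _ ≤ 2 * r := h2
  rw [hsplit, show 2 * ((1 - Real.exp (-(9/8:ℝ)) * Real.exp (-(3 / (2 * r)))) / (1 + 3 * r / 4))
      = (2 * (1 - Real.exp (-(9/8:ℝ)) * Real.exp (-(3 / (2 * r))))) / (1 + 3 * r / 4) by ring]
  rw [div_le_div_iff₀ hr hcpos]
  nlinarith [Real.exp_nonneg (-(9/8:ℝ)), Real.exp_nonneg (-(3 / (2 * r))),
    mul_nonneg (mul_nonneg (Real.exp_nonneg (-(9/8:ℝ))) hr.le)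
      (sub_nonneg.2 he1'),
    mul_nonneg (sub_nonneg.2 hE0) (sq_nonneg r),
    mul_nonneg (sub_nonneg.2 h5u.le) (sq_nonneg r),
    mul_nonneg (sub_nonneg.2 h5u.le) hr.le,
    sq_nonneg (r - 2), mul_pos hr hr]

/-- Lower bound `∫ exp(−ηu − (L/2)u² − |u|) du ≥ min{(√5−1)/2, (√5−1)/√L}`. -/
theorem integral_exp_quadratic_abs_ge {L : ℝ} (hL : 0 < L) (η : ℝ) :
    min ((Real.sqrt 5 - 1) / 2) ((Real.sqrt 5 - 1) / Real.sqrt L)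
      ≤ ∫ u : ℝ, Real.exp (-η * u - L / 2 * u ^ 2 - |u|) := by
  have hr : 0 < Real.sqrt L := Real.sqrt_pos.2 hL
  rcases lt_or_ge (|η|) 1 with hη | hη
  · have hmain := aux_mid hL hη
    rcases le_or_gt (Real.sqrt L) 2 with hr2 | hr2
    · exact le_trans (min_le_left _ _) (le_trans (aux_num1 _ hr hr2) hmain)
    · exact le_trans (min_le_right _ _) (le_trans (aux_num2 _ hr hr2) hmain)
  · refine le_trans (min_le_right _ _) ?_
    rcases le_abs'.1 hη with hη' | hη'
    · exact aux_eta_le_neg_one hL hη'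
    · exact aux_one_le_eta hL hη'
end

section
/- Suppose f(y | α, β) ≤ C for all (α, β) ∈ ℝ^d × ℝ^p, and ℓ(α, β) = −log f(y | α, β) satisfies ℓ(α, β) ≤ ℓ₀ + η^⊤(α, λβ) + (L/2)(‖α‖₂² + λ²‖β‖₂²) for some ℓ₀ ∈ ℝ, L ≥ 0, η ∈ ℝ^{d+p}. Let π(α, β) ∝ f(y | α, β) exp(−θ²‖α‖₂²/2 − λ‖β‖₁) and μ(α, β) = θ^d (2π)^{−d/2} exp(−θ²‖α‖₂²/2) (λ/2)^p exp(−λ‖β‖₁). Then for all (α, β), π(α, β)/μ(α, β) ≤ C e^{ℓ₀} ((L+θ²)/θ²)^{d/2} max{4/(√5−1), 2√L/(√5−1)}^p. -/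
/-!
By the quadratic upper bound on `ℓ`, `f · prior ≥ e^{-ℓ₀} e^{-η·(α, λβ)} Q`, where `Q` is a
product of Gaussian weights of precision `L + θ²` in the `α_i` and of weights
`exp (-Lλ²u²/2 - λ|u|)` in the `β_j`. As `Q` is even, averaging over `w` and `-w` (`cosh ≥ 1`)
shows that the tilt `e^{-η·(α, λβ)}` can only increase its integral, so `η` drops out. The
integral of `Q` factorises: each Gaussian factor is `√(2π/(L + θ²))`, and each Laplace factor is
`(2/λ) ∫₀^∞ exp (-Lv²/2 - v) dv ≥ (2/λ) · 2/(1 + √(1 + 4L)) ≥ 2/(λ max {4/(√5-1), 2√L/(√5-1)})`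
by Birnbaum's lower bound for the Mills ratio. Dividing `f ≤ C` by this lower bound for the
normalising constant gives the claim.
-/

open MeasureTheory Real Set Filter Topology

theorem two_mul_add_div_sqrt_le {s L : ℝ} (hr : 0 < s ^ 2 + 4 * L) :
    2 * (s + L / √(s ^ 2 + 4 * L)) ≤ s + √(s ^ 2 + 4 * L) := by
  have hq : 0 < √(s ^ 2 + 4 * L) := sqrt_pos.2 hr
  have hq2 := sq_sqrt hr.le
  have hP : 0 < s ^ 2 + 2 * L := by nlinarith [sq_nonneg s]
  have key : s * √(s ^ 2 + 4 * L) ≤ s ^ 2 + 2 * L := by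
    nlinarith [sq_nonneg L, congrArg (s ^ 2 * ·) hq2]
  rw [← sub_nonneg]
  have : s + √(s ^ 2 + 4 * L) - 2 * (s + L / √(s ^ 2 + 4 * L))
      = (s ^ 2 + 2 * L - s * √(s ^ 2 + 4 * L)) / √(s ^ 2 + 4 * L) := by
    field_simp; linear_combination hq2
  rw [this]; exact div_nonneg (by linarith) hq.le

/-- Birnbaum's bound `(√(t²+4) - t)/2 · e^{-t²/2} ≤ ∫_t^∞ e^{-s²/2} ds`, transported by
`t = √L v + 1/√L` and multiplied by `e^{1/(2L)}/√L`; in this form it stays meaningful at `L = 0`. -/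
noncomputable def gaussLaplaceTail (L v : ℝ) : ℝ :=
  2 * exp (-(L / 2) * v ^ 2 - v) / (1 + L * v + √((1 + L * v) ^ 2 + 4 * L))

theorem hasDerivAt_gaussLaplaceTail {L u : ℝ} (hL : 0 ≤ L) (hu : 0 ≤ u) :
    HasDerivAt (gaussLaplaceTail L)
      (-(2 * exp (-(L / 2) * u ^ 2 - u) * (1 + L * u + L / √((1 + L * u) ^ 2 + 4 * L))
        / (1 + L * u + √((1 + L * u) ^ 2 + 4 * L)))) u := by
  have hs : 1 ≤ 1 + L * u := by nlinarith
  have hr : 0 < (1 + L * u) ^ 2 + 4 * L := by nlinarith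
  have hφ : HasDerivAt (fun v => -(L / 2) * v ^ 2 - v) (-(L * u) - 1) u :=
    ((((hasDerivAt_id u).fun_pow 2).const_mul (-(L / 2))).fun_sub (hasDerivAt_id u)).congr_deriv
      (by simp; ring)
  have hlin : HasDerivAt (fun v => 1 + L * v) L u := by
    simpa using ((hasDerivAt_id u).const_mul L).const_add 1
  have hsq := ((hlin.fun_pow 2).add_const (4 * L)).sqrt hr.ne'
  refine ((hφ.exp.const_mul 2).div (hlin.fun_add hsq) (by positivity)).congr_deriv ?_
  field_simp
  ring

theorem gaussLaplaceTail_le {L v : ℝ} (hL : 0 ≤ L) (hv : 0 ≤ v) :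
    gaussLaplaceTail L v ≤ exp (-v) := by
  have hq := sqrt_nonneg ((1 + L * v) ^ 2 + 4 * L)
  have hD : 2 ≤ 1 + L * v + √((1 + L * v) ^ 2 + 4 * L) := by
    have h1 : (1 : ℝ) ^ 2 ≤ (1 + L * v) ^ 2 + 4 * L := by nlinarith [mul_nonneg hL hv]
    nlinarith [le_sqrt_of_sq_le h1]
  rw [gaussLaplaceTail, div_le_iff₀ (by linarith)]
  have : exp (-(L / 2) * v ^ 2 - v) ≤ exp (-v) := exp_le_exp.2 (by nlinarith)
  nlinarith [exp_pos (-(L / 2) * v ^ 2 - v)]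

theorem two_div_one_add_sqrt_le_integral_Ioi {L : ℝ} (hL : 0 ≤ L) :
    2 / (1 + √(1 + 4 * L)) ≤ ∫ v in Ioi 0, exp (-(L / 2) * v ^ 2 - v) := by
  set F' : ℝ → ℝ := fun u => -(2 * exp (-(L / 2) * u ^ 2 - u) *
    (1 + L * u + L / √((1 + L * u) ^ 2 + 4 * L)) / (1 + L * u + √((1 + L * u) ^ 2 + 4 * L)))
  have hF'_bounds : ∀ u ∈ Ioi (0 : ℝ), 0 ≤ -F' u ∧ -F' u ≤ exp (-(L / 2) * u ^ 2 - u) := by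
    intro u (hu : 0 < u)
    have hs : 1 ≤ 1 + L * u := by nlinarith
    have hr : 0 < (1 + L * u) ^ 2 + 4 * L := by nlinarith
    have hq := sqrt_pos.2 hr
    have hD : 0 < 1 + L * u + √((1 + L * u) ^ 2 + 4 * L) := by linarith
    simp only [F', neg_neg]
    refine ⟨by positivity, ?_⟩
    rw [div_le_iff₀ hD, mul_assoc]
    have := two_mul_add_div_sqrt_le hr
    nlinarith [exp_pos (-(L / 2) * u ^ 2 - u)]
  have htendsto : Tendsto (gaussLaplaceTail L) atTop (𝓝 0) := by
    refine squeeze_zero' (eventually_atTop.2 ⟨0, fun v hv => ?_⟩)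
      (eventually_atTop.2 ⟨0, fun v hv => gaussLaplaceTail_le hL hv⟩)
      tendsto_exp_neg_atTop_nhds_zero
    exact div_nonneg (by positivity) (by nlinarith [sqrt_nonneg ((1 + L * v) ^ 2 + 4 * L)])
  have hderiv : ∀ u ∈ Ici (0 : ℝ), HasDerivAt (gaussLaplaceTail L) (F' u) u :=
    fun u hu => hasDerivAt_gaussLaplaceTail hL hu
  have hF'_nonpos : ∀ u ∈ Ioi (0 : ℝ), F' u ≤ 0 := fun u hu => by linarith [(hF'_bounds u hu).1]
  have hint : IntegrableOn (fun v => exp (-(L / 2) * v ^ 2 - v)) (Ioi 0) := by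
    refine (exp_neg_integrableOn_Ioi 0 one_pos).mono' (by fun_prop) ?_
    filter_upwards [ae_restrict_mem measurableSet_Ioi] with v (hv : 0 < v)
    rw [norm_of_nonneg (exp_pos _).le, neg_one_mul]
    exact exp_le_exp.2 (by nlinarith)
  calc 2 / (1 + √(1 + 4 * L)) = ∫ u in Ioi 0, -F' u := by
        rw [integral_neg, integral_Ioi_of_hasDerivAt_of_nonpos' hderiv hF'_nonpos htendsto]
        simp [gaussLaplaceTail]
    _ ≤ _ := setIntegral_mono_on (integrableOn_Ioi_deriv_of_nonpos' hderiv hF'_nonpos htendsto).neg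
        hint measurableSet_Ioi (fun u hu => (hF'_bounds u hu).2)

theorem one_add_sqrt_div_two_le_max {L : ℝ} (hL : 0 ≤ L) :
    (1 + √(1 + 4 * L)) / 2 ≤ max (4 / (√5 - 1)) (2 * √L / (√5 - 1)) := by
  have h5 : √5 ^ 2 = 5 := sq_sqrt (by norm_num)
  have h2 : 2 < √5 := by nlinarith [sqrt_nonneg 5]
  have hinv : 4 / (√5 - 1) = √5 + 1 := by
    rw [div_eq_iff (by linarith)]; linear_combination -h5
  rcases le_total L 1 with hL1 | hL1
  · refine le_max_of_le_left ?_
    rw [hinv]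
    have : √(1 + 4 * L) ≤ √5 := sqrt_le_sqrt (by linarith)
    linarith
  · refine le_max_of_le_right ?_
    have hsL : 1 ≤ √L := by simpa using sqrt_le_sqrt hL1
    have hLsq := sq_sqrt hL
    have : √(1 + 4 * L) ≤ √5 * √L + √L - 1 := by
      rw [sqrt_le_left (by nlinarith)]
      nlinarith [mul_nonneg (sqrt_nonneg 5) (sub_nonneg.2 hsL)]
    rw [le_div_iff₀ (by linarith)]
    nlinarith

theorem integral_exp_neg_sq_sub_abs_eq {L lam : ℝ} (hlam : 0 < lam) :
    ∫ u, exp (-(L * lam ^ 2 / 2) * u ^ 2 - lam * |u|)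
      = 2 / lam * ∫ v in Ioi 0, exp (-(L / 2) * v ^ 2 - v) := by
  have habs := integral_comp_abs (f := fun x => exp (-(L * lam ^ 2 / 2) * x ^ 2 - lam * x))
  have hscale := integral_comp_mul_left_Ioi (fun v => exp (-(L / 2) * v ^ 2 - v)) 0 hlam
  simp only [sq_abs, mul_zero, smul_eq_mul] at habs hscale
  rw [habs, div_eq_mul_inv 2 lam, mul_assoc, ← hscale]
  congr 2 with x
  ring_nf

theorem four_div_le_integral_exp_neg_sq_sub_abs {L lam : ℝ} (hL : 0 ≤ L) (hlam : 0 < lam) :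
    4 / (lam * (1 + √(1 + 4 * L))) ≤ ∫ u, exp (-(L * lam ^ 2 / 2) * u ^ 2 - lam * |u|) := by
  rw [integral_exp_neg_sq_sub_abs_eq hlam]
  calc 4 / (lam * (1 + √(1 + 4 * L))) = 2 / lam * (2 / (1 + √(1 + 4 * L))) := by
        field_simp; norm_num
    _ ≤ _ := by gcongr; exact two_div_one_add_sqrt_le_integral_Ioi hL

theorem integrable_exp_neg_sq_sub_abs {L lam : ℝ} (hL : 0 ≤ L) (hlam : 0 < lam) :
    Integrable fun u => exp (-(L * lam ^ 2 / 2) * u ^ 2 - lam * |u|) :=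
  .of_integral_ne_zero
    ((four_div_le_integral_exp_neg_sq_sub_abs hL hlam).trans_lt' (by positivity)).ne'

theorem MeasureTheory.Measure.isNegInvariant_prod {α β : Type*}
    [MeasurableSpace α] [MeasurableSpace β] [Neg α] [Neg β] [MeasurableNeg α] [MeasurableNeg β]
    (μ : Measure α) (ν : Measure β) [SFinite μ] [SFinite ν] [μ.IsNegInvariant] [ν.IsNegInvariant] :
    (μ.prod ν).IsNegInvariant := by
  constructor
  change Measure.map (Prod.map Neg.neg Neg.neg) _ = _
  rw [← Measure.map_prod_map μ ν measurable_neg measurable_neg,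
    Measure.map_neg_eq_self, Measure.map_neg_eq_self]

theorem integral_le_integral_exp_mul_of_odd {E : Type*} [MeasurableSpace E] [AddGroup E]
    [MeasurableNeg E] {μ : Measure E} [μ.IsNegInvariant] {φ Q : E → ℝ}
    (hφ : ∀ x, φ (-x) = -φ x) (hQ : ∀ x, Q (-x) = Q x) (hQ0 : ∀ x, 0 ≤ Q x)
    (hQi : Integrable Q μ) (hi : Integrable (fun x => exp (φ x) * Q x) μ) :
    ∫ x, Q x ∂μ ≤ ∫ x, exp (φ x) * Q x ∂μ := by
  have hflip : ∫ x, exp (-φ x) * Q x ∂μ = ∫ x, exp (φ x) * Q x ∂μ := by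
    rw [← integral_neg_eq_self]; simp only [hφ, hQ, neg_neg]
  have hi' : Integrable (fun x => exp (-φ x) * Q x) μ := by
    simpa only [hφ, hQ] using hi.comp_neg
  have hcosh : ∀ x, (exp (φ x) * Q x + exp (-φ x) * Q x) / 2 = cosh (φ x) * Q x := by
    intro x; rw [cosh_eq]; ring
  calc ∫ x, Q x ∂μ ≤ ∫ x, (exp (φ x) * Q x + exp (-φ x) * Q x) / 2 ∂μ :=
        integral_mono hQi ((hi.add hi').div_const 2) fun x => by
          simpa only [hcosh] using le_mul_of_one_le_left (hQ0 x) (one_le_cosh (φ x))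
    _ = ∫ x, exp (φ x) * Q x ∂μ := by
        rw [integral_div, integral_add hi hi', hflip, add_self_div_two]

section
variable {ι κ : Type*} [Fintype ι] [Fintype κ]

noncomputable def gaussLaplaceWeight (a L lam : ℝ) (w : (ι → ℝ) × (κ → ℝ)) : ℝ :=
  exp (-a * ∑ i, w.1 i ^ 2 - (L * lam ^ 2 / 2 * ∑ j, w.2 j ^ 2 + lam * ∑ j, |w.2 j|))

theorem gaussLaplaceWeight_eq_prod (a L lam : ℝ) (w : (ι → ℝ) × (κ → ℝ)) :
    gaussLaplaceWeight a L lam w = (∏ i, exp (-a * w.1 i ^ 2)) *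
      ∏ j, exp (-(L * lam ^ 2 / 2) * w.2 j ^ 2 - lam * |w.2 j|) := by
  rw [← exp_sum, ← exp_sum, ← exp_add, gaussLaplaceWeight]
  congr 1
  simp only [Finset.sum_sub_distrib, neg_mul, Finset.sum_neg_distrib, ← Finset.mul_sum]
  ring

theorem gaussLaplaceWeight_pos (a L lam : ℝ) (w : (ι → ℝ) × (κ → ℝ)) :
    0 < gaussLaplaceWeight a L lam w :=
  exp_pos _

theorem gaussLaplaceWeight_neg (a L lam : ℝ) (w : (ι → ℝ) × (κ → ℝ)) :
    gaussLaplaceWeight a L lam (-w) = gaussLaplaceWeight a L lam w := by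
  simp [gaussLaplaceWeight]

theorem integral_gaussLaplaceWeight (a L lam : ℝ) :
    ∫ w, gaussLaplaceWeight (ι := ι) (κ := κ) a L lam w
      = √(π / a) ^ Fintype.card ι
        * (∫ u, exp (-(L * lam ^ 2 / 2) * u ^ 2 - lam * |u|)) ^ Fintype.card κ := by
  simp only [gaussLaplaceWeight_eq_prod]
  rw [Measure.volume_eq_prod, integral_prod_mul (fun α : ι → ℝ => ∏ i, exp (-a * α i ^ 2))
      (fun β : κ → ℝ => ∏ j, exp (-(L * lam ^ 2 / 2) * β j ^ 2 - lam * |β j|)),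
    integral_fintype_prod_volume_eq_pow (fun u : ℝ => exp (-a * u ^ 2)),
    integral_fintype_prod_volume_eq_pow
      (fun u : ℝ => exp (-(L * lam ^ 2 / 2) * u ^ 2 - lam * |u|)),
    integral_gaussian]

theorem integrable_gaussLaplaceWeight {a L lam : ℝ} (ha : 0 < a) (hL : 0 ≤ L) (hlam : 0 < lam) :
    Integrable (gaussLaplaceWeight (ι := ι) (κ := κ) a L lam) := by
  rw [funext (gaussLaplaceWeight_eq_prod a L lam), Measure.volume_eq_prod]
  exact (Integrable.fintype_prod fun _ => integrable_exp_neg_mul_sq ha).mul_prod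
    (Integrable.fintype_prod fun _ => integrable_exp_neg_sq_sub_abs hL hlam)

theorem le_integral_gaussLaplaceWeight (a : ℝ) {L lam : ℝ} (hL : 0 ≤ L) (hlam : 0 < lam) :
    √(π / a) ^ Fintype.card ι
        * (2 / (lam * max (4 / (√5 - 1)) (2 * √L / (√5 - 1)))) ^ Fintype.card κ
      ≤ ∫ w, gaussLaplaceWeight (ι := ι) (κ := κ) a L lam w := by
  have hM := one_add_sqrt_div_two_le_max hL
  have hD : 0 < (1 + √(1 + 4 * L)) / 2 := by positivity
  rw [integral_gaussLaplaceWeight]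
  gcongr
  · exact div_nonneg zero_le_two (mul_pos hlam (hD.trans_le hM)).le
  calc 2 / (lam * max (4 / (√5 - 1)) (2 * √L / (√5 - 1)))
      ≤ 2 / (lam * ((1 + √(1 + 4 * L)) / 2)) := by gcongr
    _ = 4 / (lam * (1 + √(1 + 4 * L))) := by field_simp; norm_num
    _ ≤ _ := four_div_le_integral_exp_neg_sq_sub_abs hL hlam

theorem exp_neg_mul_exp_mul_gaussLaplaceWeight_le {a lam ℓ₀ L y : ℝ} (ηa : ι → ℝ) (ηb : κ → ℝ)
    (w : (ι → ℝ) × (κ → ℝ)) (hy : 0 < y)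
    (hℓ : -log y ≤ ℓ₀ + ((∑ j, ηa j * w.1 j) + ∑ j, ηb j * (lam * w.2 j))
      + L / 2 * ((∑ j, w.1 j ^ 2) + lam ^ 2 * ∑ j, w.2 j ^ 2)) :
    exp (-ℓ₀) * (exp (-((∑ j, ηa j * w.1 j) + ∑ j, ηb j * (lam * w.2 j)))
        * gaussLaplaceWeight (a + L / 2) L lam w)
      ≤ y * gaussLaplaceWeight a 0 lam w := by
  have hy' : exp (-(ℓ₀ + ((∑ j, ηa j * w.1 j) + ∑ j, ηb j * (lam * w.2 j))
      + L / 2 * ((∑ j, w.1 j ^ 2) + lam ^ 2 * ∑ j, w.2 j ^ 2))) ≤ y := by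
    rw [← exp_log hy]; exact exp_le_exp.2 (by linarith)
  calc _ = exp (-(ℓ₀ + ((∑ j, ηa j * w.1 j) + ∑ j, ηb j * (lam * w.2 j))
          + L / 2 * ((∑ j, w.1 j ^ 2) + lam ^ 2 * ∑ j, w.2 j ^ 2)))
        * gaussLaplaceWeight a 0 lam w := by
        simp only [gaussLaplaceWeight, ← exp_add]; congr 1; ring
    _ ≤ _ := by gcongr; exact (gaussLaplaceWeight_pos _ _ _ _).le

theorem exp_neg_mul_integral_le_integral_mul_gaussLaplaceWeight {a lam C ℓ₀ L : ℝ}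
    (ha : 0 < a) (hlam : 0 < lam) (hL : 0 ≤ L) (ηa : ι → ℝ) (ηb : κ → ℝ)
    {f : (ι → ℝ) × (κ → ℝ) → ℝ} (hfpos : ∀ w, 0 < f w) (hfm : Measurable f)
    (hfC : ∀ w, f w ≤ C)
    (hℓ : ∀ w : (ι → ℝ) × (κ → ℝ),
      -log (f w) ≤ ℓ₀ + ((∑ j, ηa j * w.1 j) + ∑ j, ηb j * (lam * w.2 j))
        + L / 2 * ((∑ j, w.1 j ^ 2) + lam ^ 2 * ∑ j, w.2 j ^ 2)) :
    exp (-ℓ₀) * ∫ w : (ι → ℝ) × (κ → ℝ), gaussLaplaceWeight (a + L / 2) L lam w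
      ≤ ∫ w, f w * gaussLaplaceWeight a 0 lam w := by
  set φ : (ι → ℝ) × (κ → ℝ) → ℝ := fun w => -((∑ j, ηa j * w.1 j) + ∑ j, ηb j * (lam * w.2 j))
  have hφ : ∀ w, φ (-w) = -φ w := fun w => by simp [φ, Finset.sum_neg_distrib]; ring
  have hpt := fun w => exp_neg_mul_exp_mul_gaussLaplaceWeight_le (a := a) ηa ηb w (hfpos w) (hℓ w)
  have hK₀ := integrable_gaussLaplaceWeight (ι := ι) (κ := κ) ha le_rfl hlam
  have hK₁ := integrable_gaussLaplaceWeight (ι := ι) (κ := κ)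
    (by positivity : 0 < a + L / 2) hL hlam
  have hfK : Integrable fun w => f w * gaussLaplaceWeight a 0 lam w := by
    refine (hK₀.const_mul C).mono' (hfm.aestronglyMeasurable.mul hK₀.aestronglyMeasurable)
      (Eventually.of_forall fun w => ?_)
    have hK := (gaussLaplaceWeight_pos a 0 lam w).le
    rw [norm_of_nonneg (mul_nonneg (hfpos w).le hK)]
    exact mul_le_mul_of_nonneg_right (hfC w) hK
  have hi : Integrable fun w => exp (φ w) * gaussLaplaceWeight (a + L / 2) L lam w := by
    refine (hfK.const_mul (exp ℓ₀)).mono' ?_ (Eventually.of_forall fun w => ?_)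
    · exact (by fun_prop : Continuous φ).rexp.aestronglyMeasurable.mul hK₁.aestronglyMeasurable
    · rw [norm_of_nonneg (mul_pos (exp_pos _) (gaussLaplaceWeight_pos _ _ _ _)).le]
      calc _ = exp ℓ₀ * (exp (-ℓ₀) * (exp (φ w) * gaussLaplaceWeight (a + L / 2) L lam w)) := by
            rw [← mul_assoc, ← exp_add, add_neg_cancel, exp_zero, one_mul]
        _ ≤ _ := mul_le_mul_of_nonneg_left (hpt w) (exp_pos _).le
  have : (volume : Measure ((ι → ℝ) × (κ → ℝ))).IsNegInvariant := by
    rw [Measure.volume_eq_prod]; exact Measure.isNegInvariant_prod _ _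
  calc exp (-ℓ₀) * ∫ w, gaussLaplaceWeight (a + L / 2) L lam w
      ≤ exp (-ℓ₀) * ∫ w, exp (φ w) * gaussLaplaceWeight (a + L / 2) L lam w := by
        refine mul_le_mul_of_nonneg_left ?_ (exp_pos _).le
        exact integral_le_integral_exp_mul_of_odd hφ (gaussLaplaceWeight_neg _ _ _)
          (fun w => (gaussLaplaceWeight_pos _ _ _ w).le) hK₁ hi
    _ = ∫ w, exp (-ℓ₀) * (exp (φ w) * gaussLaplaceWeight (a + L / 2) L lam w) :=
        (integral_const_mul _ _).symm
    _ ≤ _ := integral_mono (hi.const_mul _) hfK hpt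

end

theorem sqrt_pi_div_pow_mul_eq_inv_rpow {θ L : ℝ} (hθ : 0 < θ) (hL : 0 ≤ L) (d : ℕ) :
    √(π / (θ ^ 2 / 2 + L / 2)) ^ d * (θ ^ d / (2 * π) ^ ((d : ℝ) / 2))
      = (((L + θ ^ 2) / θ ^ 2) ^ ((d : ℝ) / 2))⁻¹ := by
  have hθd : θ ^ d = (θ ^ 2) ^ ((d : ℝ) / 2) := by
    rw [← rpow_natCast, ← rpow_two, ← rpow_mul hθ.le]; ring_nf
  rw [← rpow_natCast, ← rpow_div_two_eq_sqrt _ (by positivity), hθd,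
    ← div_rpow (by positivity) (by positivity), ← mul_rpow (by positivity) (by positivity),
    ← inv_rpow (by positivity), inv_div]
  congr 1
  field_simp
  ring

theorem gaussLaplace_constants_cancel {θ L ℓ₀ lam M : ℝ} (hθ : 0 < θ) (hL : 0 ≤ L)
    (hlam : lam ≠ 0) (hM : M ≠ 0) (d p : ℕ) :
    exp (-ℓ₀) * (√(π / (θ ^ 2 / 2 + L / 2)) ^ d * (2 / (lam * M)) ^ p)
        * (θ ^ d / (2 * π) ^ ((d : ℝ) / 2) * (lam ^ p / 2 ^ p))
      = (exp ℓ₀ * ((L + θ ^ 2) / θ ^ 2) ^ ((d : ℝ) / 2) * M ^ p)⁻¹ := by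
  calc _ = exp (-ℓ₀) * (√(π / (θ ^ 2 / 2 + L / 2)) ^ d * (θ ^ d / (2 * π) ^ ((d : ℝ) / 2)))
        * (2 / (lam * M) * (lam / 2)) ^ p := by rw [mul_pow, div_pow lam]; ring
    _ = _ := by
      rw [sqrt_pi_div_pow_mul_eq_inv_rpow hθ hL, exp_neg, mul_inv, mul_inv, ← inv_pow]
      congr 2
      field_simp

theorem posterior_density_ratio_bound_general {d p : ℕ} {θ lam C ℓ₀ L : ℝ}
    (hθ : 0 < θ) (hlam : 0 < lam) (hL : 0 ≤ L)
    (ηa : Fin d → ℝ) (ηb : Fin p → ℝ)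
    (f : (Fin d → ℝ) × (Fin p → ℝ) → ℝ)
    (hfpos : ∀ w, 0 < f w) (hfm : Measurable f) (hfC : ∀ w, f w ≤ C)
    (hℓ : ∀ w : (Fin d → ℝ) × (Fin p → ℝ),
      -Real.log (f w) ≤ ℓ₀ + ((∑ j, ηa j * w.1 j) + ∑ j, ηb j * (lam * w.2 j))
        + L / 2 * ((∑ j, w.1 j ^ 2) + lam ^ 2 * ∑ j, w.2 j ^ 2))
    (Z : ℝ)
    (hZ : Z = ∫ w : (Fin d → ℝ) × (Fin p → ℝ),
      f w * Real.exp (-θ ^ 2 * (∑ j, w.1 j ^ 2) / 2 - lam * ∑ j, |w.2 j|))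
    (μ : (Fin d → ℝ) × (Fin p → ℝ) → ℝ)
    (hμ : ∀ w, μ w = θ ^ d / (2 * π) ^ ((d : ℝ) / 2)
      * Real.exp (-θ ^ 2 * (∑ j, w.1 j ^ 2) / 2)
      * (lam ^ p / 2 ^ p) * Real.exp (-lam * ∑ j, |w.2 j|)) :
    ∀ w : (Fin d → ℝ) × (Fin p → ℝ),
      (f w * Real.exp (-θ ^ 2 * (∑ j, w.1 j ^ 2) / 2 - lam * ∑ j, |w.2 j|) / Z) / μ w
        ≤ C * Real.exp ℓ₀ * ((L + θ ^ 2) / θ ^ 2) ^ ((d : ℝ) / 2)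
          * max (4 / (Real.sqrt 5 - 1)) (2 * Real.sqrt L / (Real.sqrt 5 - 1)) ^ p := by
  set M := max (4 / (√5 - 1)) (2 * √L / (√5 - 1))
  have hM : 0 < M := (by positivity : (0 : ℝ) < (1 + √(1 + 4 * L)) / 2).trans_le
    (one_add_sqrt_div_two_le_max hL)
  set Z₀ := exp (-ℓ₀) * (√(π / (θ ^ 2 / 2 + L / 2)) ^ d * (2 / (lam * M)) ^ p)
  have hZ₀ : Z₀ ≤ Z := by
    have hprior : ∀ w : (Fin d → ℝ) × (Fin p → ℝ),
        exp (-θ ^ 2 * (∑ j, w.1 j ^ 2) / 2 - lam * ∑ j, |w.2 j|)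
          = gaussLaplaceWeight (θ ^ 2 / 2) 0 lam w := fun w => by
      rw [gaussLaplaceWeight]; congr 1; ring
    rw [hZ]; simp only [hprior]
    simpa using (mul_le_mul_of_nonneg_left (le_integral_gaussLaplaceWeight (ι := Fin d)
      (κ := Fin p) (θ ^ 2 / 2 + L / 2) hL hlam) (exp_pos (-ℓ₀)).le).trans
      (exp_neg_mul_integral_le_integral_mul_gaussLaplaceWeight (by positivity) hlam hL ηa ηb
        hfpos hfm hfC hℓ)
  intro w
  set K := θ ^ d / (2 * π) ^ ((d : ℝ) / 2) * (lam ^ p / 2 ^ p)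
  have hμw : μ w = K * exp (-θ ^ 2 * (∑ j, w.1 j ^ 2) / 2 - lam * ∑ j, |w.2 j|) := by
    rw [hμ w, sub_eq_add_neg, exp_add, ← neg_mul]; ring
  calc _ = f w / (Z * K) := by rw [hμw]; field_simp
    _ ≤ C / (Z₀ * K) := div_le_div₀ ((hfpos w).le.trans (hfC w)) (hfC w) (by positivity)
        (mul_le_mul_of_nonneg_right hZ₀ (by positivity))
    _ = _ := by
      rw [gaussLaplace_constants_cancel hθ hL hlam.ne' hM.ne', div_inv_eq_mul]; ring

/-- Density ratio bound: if `f(y|α,β) ≤ C` and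
`ℓ(α,β) ≤ ℓ₀ + ηᵀ(α,λβ) + (L/2)(‖α‖₂² + λ²‖β‖₂²)`, then the posterior density
`π ∝ f · exp(−θ²‖α‖₂²/2 − λ‖β‖₁)` satisfies
`π/μ ≤ C e^{ℓ₀} ((L+θ²)/θ²)^{d/2} max{4/(√5−1), 2√L/(√5−1)}^p`, where `μ` is the
product of `N(0,θ⁻²)` and `Laplace(λ)` densities. -/
theorem posterior_density_ratio_bound {d p : ℕ} {θ lam C ℓ₀ L : ℝ}
    (hθ : 0 < θ) (hlam : 0 < lam) (hC : 0 < C) (hL : 0 ≤ L)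
    (ηa : Fin d → ℝ) (ηb : Fin p → ℝ)
    (f : (Fin d → ℝ) × (Fin p → ℝ) → ℝ)
    (hfpos : ∀ w, 0 < f w) (hfm : Measurable f) (hfC : ∀ w, f w ≤ C)
    (hℓ : ∀ w : (Fin d → ℝ) × (Fin p → ℝ),
      -Real.log (f w) ≤ ℓ₀ + ((∑ j, ηa j * w.1 j) + ∑ j, ηb j * (lam * w.2 j))
        + L / 2 * ((∑ j, w.1 j ^ 2) + lam ^ 2 * ∑ j, w.2 j ^ 2))
    (Z : ℝ)
    (hZ : Z = ∫ w : (Fin d → ℝ) × (Fin p → ℝ),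
      f w * Real.exp (-θ ^ 2 * (∑ j, w.1 j ^ 2) / 2 - lam * ∑ j, |w.2 j|))
    (μ : (Fin d → ℝ) × (Fin p → ℝ) → ℝ)
    (hμ : ∀ w, μ w = θ ^ d / (2 * π) ^ ((d : ℝ) / 2)
      * Real.exp (-θ ^ 2 * (∑ j, w.1 j ^ 2) / 2)
      * (lam ^ p / 2 ^ p) * Real.exp (-lam * ∑ j, |w.2 j|)) :
    ∀ w : (Fin d → ℝ) × (Fin p → ℝ),
      (f w * Real.exp (-θ ^ 2 * (∑ j, w.1 j ^ 2) / 2 - lam * ∑ j, |w.2 j|) / Z) / μ w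
        ≤ C * Real.exp ℓ₀ * ((L + θ ^ 2) / θ ^ 2) ^ ((d : ℝ) / 2)
          * max (4 / (Real.sqrt 5 - 1)) (2 * Real.sqrt L / (Real.sqrt 5 - 1)) ^ p :=
  posterior_density_ratio_bound_general hθ hlam hL ηa ηb f hfpos hfm hfC hℓ Z hZ μ hμ
end

section
/- Under the hypotheses of the density ratio lemma — f(y|α,β) ≤ C and ℓ(α,β) ≤ ℓ₀ + η^⊤(α,λβ) + (L/2)(‖α‖₂² + λ²‖β‖₂²) — define the Gaussian initial density ω_{η,L}(α,β) as the density of (A, B) where (A, λB) ~ N(−V_L η, V_L) with V_L = diag(I_d/(L+θ²), I_p/(L+1)). Then for all (α, β), log ω_{η,L}(α,β) − log π(α,β | y) ≤ (d/2) log(L/θ² + 1) + (p/2) log(L+1) − (p/2) log(2π) − (1/2) η^⊤ V_L η + log C + p log 2 + ℓ₀ + p/2. -/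
/-!
Since `π = f · prior / Z`, the log-ratio is `log ω - log f - log prior + log Z`. Bounding `f ≤ C`
under the integral gives `Z ≤ C (2π/θ²)^{d/2} (2/λ)^p`, the exact Gaussian and Laplace normalising
constants. Completing the square in `log ω` produces
`-((L+θ²)‖α‖² + (L+1)λ²‖β‖²)/2 - ηᵀ(α, λβ) - ηᵀV_Lη/2`: the quadratic upper bound on `-log f`
cancels the `L`- and `η`-terms, `θ²‖α‖²/2` cancels against the prior, and Young's inequality
`λ‖β‖₁ ≤ λ²‖β‖₂²/2 + p/2` absorbs the Laplace term into the remaining `-λ²‖β‖²/2`.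
-/

open MeasureTheory Real

section Integrals

variable {α : Type*} [MeasurableSpace α] {μ : Measure α}

lemma integral_pos_of_forall_pos [NeZero μ] {g : α → ℝ} (hg : Integrable g μ)
    (hpos : ∀ x, 0 < g x) : 0 < ∫ x, g x ∂μ := by
  rw [integral_pos_iff_support_of_nonneg (fun x ↦ (hpos x).le) hg,
    Function.support_eq_univ fun x ↦ (hpos x).ne']
  simp [NeZero.ne μ]

lemma integral_mul_le_const_mul {f g : α → ℝ} {C : ℝ} (hf0 : ∀ x, 0 ≤ f x) (hfC : ∀ x, f x ≤ C)
    (hg0 : ∀ x, 0 ≤ g x) (hg : Integrable g μ) :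
    ∫ x, f x * g x ∂μ ≤ C * ∫ x, g x ∂μ := by
  rw [← integral_const_mul]
  exact integral_mono_of_nonneg (.of_forall fun x ↦ mul_nonneg (hf0 x) (hg0 x))
    (hg.const_mul C) (.of_forall fun x ↦ mul_le_mul_of_nonneg_right (hfC x) (hg0 x))

end Integrals

lemma integral_exp_neg_mul_abs {lam : ℝ} (hlam : 0 < lam) :
    ∫ x : ℝ, exp (-(lam * |x|)) = 2 / lam := by
  rw [integral_comp_abs (f := fun x ↦ exp (-(lam * x)))]
  have h := integral_comp_mul_left_Ioi (fun x ↦ exp (-x)) 0 hlam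
  simp only [mul_zero, smul_eq_mul] at h
  rw [h, integral_exp_neg_Ioi_zero]
  field_simp

lemma integrable_exp_neg_mul_abs {lam : ℝ} (hlam : 0 < lam) :
    Integrable fun x : ℝ ↦ exp (-(lam * |x|)) :=
  .of_integral_ne_zero (by rw [integral_exp_neg_mul_abs hlam]; positivity)

section Prior

variable {ι κ : Type*} [Fintype ι] [Fintype κ] {θ lam : ℝ}

/-- The unnormalised prior of the posterior `π`: Gaussian in `α`, Laplace in `β`. -/
noncomputable def priorWeight (θ lam : ℝ) (w : (ι → ℝ) × (κ → ℝ)) : ℝ :=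
  exp (-θ ^ 2 * (∑ j, w.1 j ^ 2) / 2 - lam * ∑ j, |w.2 j|)

lemma priorWeight_pos (w : (ι → ℝ) × (κ → ℝ)) : 0 < priorWeight θ lam w := exp_pos _

lemma priorWeight_eq_prod (w : (ι → ℝ) × (κ → ℝ)) :
    priorWeight θ lam w
      = (∏ j, exp (-(θ ^ 2 / 2) * w.1 j ^ 2)) * ∏ j, exp (-(lam * |w.2 j|)) := by
  rw [priorWeight, ← exp_sum, ← exp_sum, ← exp_add]
  congr 1
  simp only [neg_mul, Finset.sum_neg_distrib, ← Finset.mul_sum]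
  ring

lemma integrable_priorWeight (hθ : θ ≠ 0) (hlam : 0 < lam) :
    Integrable (priorWeight (ι := ι) (κ := κ) θ lam) := by
  simp only [funext priorWeight_eq_prod, Measure.volume_eq_prod]
  exact .mul_prod (.fintype_prod fun _ ↦ integrable_exp_neg_mul_sq (by positivity))
    (.fintype_prod fun _ ↦ integrable_exp_neg_mul_abs hlam)

lemma integral_priorWeight (hlam : 0 < lam) :
    ∫ w, priorWeight (ι := ι) (κ := κ) θ lam w
      = √(2 * π / θ ^ 2) ^ Fintype.card ι * (2 / lam) ^ Fintype.card κ := by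
  simp only [priorWeight_eq_prod, Measure.volume_eq_prod]
  rw [integral_prod_mul (f := fun a : ι → ℝ ↦ ∏ j, exp (-(θ ^ 2 / 2) * a j ^ 2))
      (g := fun b : κ → ℝ ↦ ∏ j, exp (-(lam * |b j|))),
    integral_fintype_prod_volume_eq_pow (fun x : ℝ ↦ exp (-(θ ^ 2 / 2) * x ^ 2)),
    integral_fintype_prod_volume_eq_pow (fun x : ℝ ↦ exp (-(lam * |x|))),
    integral_gaussian, integral_exp_neg_mul_abs hlam]
  congr 3
  field_simp

variable {f : (ι → ℝ) × (κ → ℝ) → ℝ} {C : ℝ}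

lemma integral_mul_priorWeight_pos (hθ : θ ≠ 0) (hlam : 0 < lam) (hfpos : ∀ w, 0 < f w)
    (hfm : Measurable f) (hfC : ∀ w, f w ≤ C) :
    0 < ∫ w, f w * priorWeight θ lam w := by
  refine integral_pos_of_forall_pos ?_ fun w ↦ mul_pos (hfpos w) (priorWeight_pos w)
  exact (integrable_priorWeight hθ hlam).bdd_mul (c := C) hfm.aestronglyMeasurable
    (.of_forall fun w ↦ (norm_of_nonneg (hfpos w).le).trans_le (hfC w))

lemma log_integral_mul_priorWeight_le (hθ : θ ≠ 0) (hlam : 0 < lam) (hfpos : ∀ w, 0 < f w)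
    (hfm : Measurable f) (hfC : ∀ w, f w ≤ C) :
    log (∫ w, f w * priorWeight θ lam w)
      ≤ log C + Fintype.card ι / 2 * log (2 * π / θ ^ 2) + Fintype.card κ * log (2 / lam) := by
  have hC : 0 < C := (hfpos 0).trans_le (hfC 0)
  calc log (∫ w, f w * priorWeight θ lam w)
      ≤ log (C * ∫ w, priorWeight (ι := ι) (κ := κ) θ lam w) :=
        log_le_log (integral_mul_priorWeight_pos hθ hlam hfpos hfm hfC)
          (integral_mul_le_const_mul (fun w ↦ (hfpos w).le) hfC (fun w ↦ (priorWeight_pos w).le)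
            (integrable_priorWeight hθ hlam))
    _ = _ := by
        rw [integral_priorWeight hlam, log_mul hC.ne' (by positivity),
          log_mul (by positivity) (by positivity), log_pow, log_pow, log_sqrt (by positivity)]
        ring

end Prior

section Quadratic

variable {ι : Type*} [Fintype ι]

lemma mul_sum_add_div_sq {c : ℝ} (hc : c ≠ 0) (x η : ι → ℝ) :
    c * ∑ j, (x j + η j / c) ^ 2
      = c * ∑ j, x j ^ 2 + 2 * ∑ j, η j * x j + ∑ j, η j ^ 2 / c := by
  simp only [Finset.mul_sum, ← Finset.sum_add_distrib]
  exact Finset.sum_congr rfl fun j _ ↦ by field_simp; ring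

lemma mul_sum_abs_le (lam : ℝ) (b : ι → ℝ) :
    lam * ∑ j, |b j| ≤ (lam ^ 2 * ∑ j, b j ^ 2 + Fintype.card ι) / 2 := by
  rw [Finset.mul_sum, Finset.mul_sum, Finset.card_univ.symm, Finset.card_eq_sum_ones,
    Nat.cast_sum, ← Finset.sum_add_distrib, Finset.sum_div]
  refine Finset.sum_le_sum fun j _ ↦ ?_
  nlinarith [sq_nonneg (lam * |b j| - 1), sq_abs (b j)]

end Quadratic

theorem warm_start_log_ratio_bound_general {d p : ℕ} {θ lam C ℓ₀ L : ℝ}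
    (hθ : 0 < θ) (hlam : 0 < lam) (hL : 0 ≤ L)
    (ηa : Fin d → ℝ) (ηb : Fin p → ℝ)
    (f : (Fin d → ℝ) × (Fin p → ℝ) → ℝ)
    (hfpos : ∀ w, 0 < f w) (hfm : Measurable f) (hfC : ∀ w, f w ≤ C)
    (hℓ : ∀ w : (Fin d → ℝ) × (Fin p → ℝ),
      -Real.log (f w) ≤ ℓ₀ + ((∑ j, ηa j * w.1 j) + ∑ j, ηb j * (lam * w.2 j))
        + L / 2 * ((∑ j, w.1 j ^ 2) + lam ^ 2 * ∑ j, w.2 j ^ 2))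
    (Z : ℝ)
    (hZ : Z = ∫ w : (Fin d → ℝ) × (Fin p → ℝ),
      f w * Real.exp (-θ ^ 2 * (∑ j, w.1 j ^ 2) / 2 - lam * ∑ j, |w.2 j|))
    (piPost : (Fin d → ℝ) × (Fin p → ℝ) → ℝ)
    (hpi : ∀ w, piPost w =
      f w * Real.exp (-θ ^ 2 * (∑ j, w.1 j ^ 2) / 2 - lam * ∑ j, |w.2 j|) / Z)
    (ω : (Fin d → ℝ) × (Fin p → ℝ) → ℝ)
    (hω : ∀ w, ω w =
      ((L + θ ^ 2) / (2 * π)) ^ ((d : ℝ) / 2) * ((L + 1) / (2 * π)) ^ ((p : ℝ) / 2)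
        * lam ^ p
        * Real.exp (-(1 / 2) *
            ((L + θ ^ 2) * (∑ j, (w.1 j + ηa j / (L + θ ^ 2)) ^ 2)
              + (L + 1) * ∑ j, (lam * w.2 j + ηb j / (L + 1)) ^ 2))) :
    ∀ w : (Fin d → ℝ) × (Fin p → ℝ),
      Real.log (ω w) - Real.log (piPost w)
        ≤ (d : ℝ) / 2 * Real.log (L / θ ^ 2 + 1) + (p : ℝ) / 2 * Real.log (L + 1)
          - (p : ℝ) / 2 * Real.log (2 * π)
          - (1 / 2) * ((∑ j, ηa j ^ 2 / (L + θ ^ 2)) + ∑ j, ηb j ^ 2 / (L + 1))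
          + Real.log C + (p : ℝ) * Real.log 2 + ℓ₀ + (p : ℝ) / 2 := by
  intro w
  have hLθ : 0 < L + θ ^ 2 := by positivity
  have hL1 : 0 < L + 1 := by positivity
  have hZpos : 0 < Z := hZ ▸ integral_mul_priorWeight_pos hθ.ne' hlam hfpos hfm hfC
  have hlogZ := hZ ▸ log_integral_mul_priorWeight_le hθ.ne' hlam hfpos hfm hfC
  have hlogπ : log (piPost w) = log (f w) + (-θ ^ 2 * (∑ j, w.1 j ^ 2) / 2 - lam * ∑ j, |w.2 j|)
      - log Z := by
    rw [hpi w, log_div (mul_pos (hfpos w) (exp_pos _)).ne' hZpos.ne',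
      log_mul (hfpos w).ne' (exp_pos _).ne', log_exp]
  have hlogω : log (ω w) = d / 2 * (log (L + θ ^ 2) - log (2 * π))
      + p / 2 * (log (L + 1) - log (2 * π)) + p * log lam
      - 1 / 2 * ((L + θ ^ 2) * (∑ j, (w.1 j + ηa j / (L + θ ^ 2)) ^ 2)
        + (L + 1) * ∑ j, (lam * w.2 j + ηb j / (L + 1)) ^ 2) := by
    rw [hω w, log_mul (by positivity) (exp_pos _).ne', log_mul (by positivity) (by positivity),
      log_mul (by positivity) (by positivity), log_exp, log_rpow (by positivity),
      log_rpow (by positivity), log_pow, log_div hLθ.ne' (by positivity),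
      log_div hL1.ne' (by positivity)]
    ring
  have hlogL : log (L / θ ^ 2 + 1) = log (L + θ ^ 2) - log (θ ^ 2) := by
    rw [← log_div hLθ.ne' (by positivity), add_div, div_self (by positivity)]
  rw [log_div (by positivity) (by positivity), log_div (by positivity) hlam.ne',
    Fintype.card_fin, Fintype.card_fin] at hlogZ
  have hsqb := mul_sum_add_div_sq hL1.ne' (fun j ↦ lam * w.2 j) ηb
  simp only [mul_pow, ← Finset.mul_sum] at hsqb
  have hyoung := mul_sum_abs_le lam w.2
  rw [Fintype.card_fin] at hyoung
  rw [hlogπ, hlogω, hlogL]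
  linarith [hℓ w, mul_sum_add_div_sq hLθ.ne' w.1 ηa]

/-- Warm start bound: under the density ratio hypotheses, the Gaussian initial density
`ω_{η,L}`, i.e. the density of `(A,B)` with `(A, λB) ~ N(−V_L η, V_L)`,
`V_L = diag(I_d/(L+θ²), I_p/(L+1))`, satisfies
`log ω_{η,L} − log π ≤ (d/2)log(L/θ²+1) + (p/2)log(L+1) − (p/2)log(2π)
  − (1/2)ηᵀV_Lη + log C + p log 2 + ℓ₀ + p/2`. -/
theorem warm_start_log_ratio_bound {d p : ℕ} {θ lam C ℓ₀ L : ℝ}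
    (hθ : 0 < θ) (hlam : 0 < lam) (hC : 0 < C) (hL : 0 ≤ L)
    (ηa : Fin d → ℝ) (ηb : Fin p → ℝ)
    (f : (Fin d → ℝ) × (Fin p → ℝ) → ℝ)
    (hfpos : ∀ w, 0 < f w) (hfm : Measurable f) (hfC : ∀ w, f w ≤ C)
    (hℓ : ∀ w : (Fin d → ℝ) × (Fin p → ℝ),
      -Real.log (f w) ≤ ℓ₀ + ((∑ j, ηa j * w.1 j) + ∑ j, ηb j * (lam * w.2 j))
        + L / 2 * ((∑ j, w.1 j ^ 2) + lam ^ 2 * ∑ j, w.2 j ^ 2))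
    (Z : ℝ)
    (hZ : Z = ∫ w : (Fin d → ℝ) × (Fin p → ℝ),
      f w * Real.exp (-θ ^ 2 * (∑ j, w.1 j ^ 2) / 2 - lam * ∑ j, |w.2 j|))
    (piPost : (Fin d → ℝ) × (Fin p → ℝ) → ℝ)
    (hpi : ∀ w, piPost w =
      f w * Real.exp (-θ ^ 2 * (∑ j, w.1 j ^ 2) / 2 - lam * ∑ j, |w.2 j|) / Z)
    (ω : (Fin d → ℝ) × (Fin p → ℝ) → ℝ)
    (hω : ∀ w, ω w =
      ((L + θ ^ 2) / (2 * π)) ^ ((d : ℝ) / 2) * ((L + 1) / (2 * π)) ^ ((p : ℝ) / 2)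
        * lam ^ p
        * Real.exp (-(1 / 2) *
            ((L + θ ^ 2) * (∑ j, (w.1 j + ηa j / (L + θ ^ 2)) ^ 2)
              + (L + 1) * ∑ j, (lam * w.2 j + ηb j / (L + 1)) ^ 2))) :
    ∀ w : (Fin d → ℝ) × (Fin p → ℝ),
      Real.log (ω w) - Real.log (piPost w)
        ≤ (d : ℝ) / 2 * Real.log (L / θ ^ 2 + 1) + (p : ℝ) / 2 * Real.log (L + 1)
          - (p : ℝ) / 2 * Real.log (2 * π)
          - (1 / 2) * ((∑ j, ηa j ^ 2 / (L + θ ^ 2)) + ∑ j, ηb j ^ 2 / (L + 1))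
          + Real.log C + (p : ℝ) * Real.log 2 + ℓ₀ + (p : ℝ) / 2 :=
  warm_start_log_ratio_bound_general hθ hlam hL ηa ηb f hfpos hfm hfC hℓ Z hZ piPost hpi ω hω
end

section
/- The Laplace distribution is a scale mixture of normals with exponential mixing: for λ > 0 and all b ∈ ℝ, (λ/2) e^{−λ|b|} = ∫₀^∞ (2πτ)^{−1/2} e^{−b²/(2τ)} · (λ²/2) e^{−λ²τ/2} dτ. -/
open MeasureTheory Real Set

/-!
Substituting `τ = u²` and completing the square, the mixture integral becomes
`λ² / √(2π) · e^{-λ|b|} · ∫₀^∞ exp (-(λ²/2) (u - k/u)²) du` with `k = |b| / λ`.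
For an even integrable `f` and `k ≥ 0`, the Cauchy–Schlömilch substitution `v = u - k/u`
(a bijection of `(0, ∞)` onto `ℝ`) gives `∫₀^∞ f (u - k/u) du = ½ ∫ f`: its Jacobian `1 + k/u²`
splits into two pieces that the involution `u ↦ k/u` exchanges. What is left is a Gaussian integral.
-/

section CauchySchlomilch

variable {E : Type*} [NormedAddCommGroup E] [NormedSpace ℝ E] {k : ℝ}

lemma hasDerivAt_const_div_id (k : ℝ) {t : ℝ} (ht : t ≠ 0) :
    HasDerivAt (fun t => k / t) (-(k / t ^ 2)) t := by
  simpa [div_eq_mul_inv] using (hasDerivAt_inv ht).const_mul k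

lemma image_const_div_Ioi (hk : 0 < k) : (fun t => k / t) '' Ioi 0 = Ioi 0 :=
  Subset.antisymm (image_subset_iff.2 fun _ ht => div_pos hk ht)
    fun t ht => ⟨k / t, div_pos hk ht, div_div_cancel₀ hk.ne'⟩

lemma injOn_const_div_Ioi (hk : 0 < k) : InjOn (fun t => k / t) (Ioi 0) := fun s _ t _ hst => by
  simpa [div_div_cancel₀ hk.ne'] using congrArg (k / ·) hst

lemma integral_Ioi_comp_const_div (hk : 0 < k) (g : ℝ → E) :
    ∫ t in Ioi 0, (k / t ^ 2) • g (k / t) = ∫ t in Ioi 0, g t := by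
  conv_rhs => rw [← image_const_div_Ioi hk]
  rw [integral_image_eq_integral_abs_deriv_smul measurableSet_Ioi
    (fun t ht => (hasDerivAt_const_div_id k (ne_of_gt ht)).hasDerivWithinAt)
    (injOn_const_div_Ioi hk)]
  refine setIntegral_congr_fun measurableSet_Ioi fun t ht => ?_
  have : 0 < t := ht
  rw [abs_neg, abs_of_pos (by positivity)]

lemma hasDerivAt_id_sub_const_div (k : ℝ) {t : ℝ} (ht : t ≠ 0) :
    HasDerivAt (fun t => t - k / t) (1 + k / t ^ 2) t :=
  ((hasDerivAt_id' t).sub (hasDerivAt_const_div_id k ht)).congr_deriv (by ring)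

lemma strictMonoOn_id_sub_const_div (hk : 0 ≤ k) :
    StrictMonoOn (fun t => t - k / t) (Ioi 0) := fun s hs t _ hst => by
  have : k / t ≤ k / s := div_le_div_of_nonneg_left hk hs hst.le
  simp only
  linarith

lemma image_id_sub_const_div_Ioi (hk : 0 < k) : (fun t => t - k / t) '' Ioi 0 = univ := by
  refine eq_univ_of_forall fun v => ?_
  set s := √(v ^ 2 + 4 * k)
  have hs : s ^ 2 = v ^ 2 + 4 * k := sq_sqrt (by positivity)
  have hvs : |v| < s := by
    rw [← sqrt_sq_eq_abs]
    exact sqrt_lt_sqrt (sq_nonneg v) (by linarith)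
  have hpos : 0 < v + s := by linarith [neg_abs_le v]
  refine ⟨(v + s) / 2, div_pos hpos two_pos, ?_⟩
  field_simp
  nlinarith

lemma integral_eq_integral_Ioi_smul_comp_id_sub_const_div (hk : 0 < k) (g : ℝ → E) :
    ∫ v, g v = ∫ t in Ioi 0, (1 + k / t ^ 2) • g (t - k / t) := by
  rw [← setIntegral_univ, ← image_id_sub_const_div_Ioi hk,
    integral_image_eq_integral_abs_deriv_smul measurableSet_Ioi
      (fun t ht => (hasDerivAt_id_sub_const_div k (ne_of_gt ht)).hasDerivWithinAt)
      (strictMonoOn_id_sub_const_div hk.le).injOn]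
  refine setIntegral_congr_fun measurableSet_Ioi fun t _ => ?_
  rw [abs_of_pos (a := 1 + k / t ^ 2) (by positivity)]

lemma integrableOn_Ioi_smul_comp_id_sub_const_div (hk : 0 < k) {g : ℝ → E} (hg : Integrable g) :
    IntegrableOn (fun t => (1 + k / t ^ 2) • g (t - k / t)) (Ioi 0) := by
  rw [← integrableOn_univ, ← image_id_sub_const_div_Ioi hk] at hg
  refine ((integrableOn_image_iff_integrableOn_abs_deriv_smul measurableSet_Ioi
    (fun t ht => (hasDerivAt_id_sub_const_div k (ne_of_gt ht)).hasDerivWithinAt)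
    (strictMonoOn_id_sub_const_div hk.le).injOn g).1 hg).congr_fun (fun t _ => ?_)
    measurableSet_Ioi
  dsimp only
  rw [abs_of_pos (a := 1 + k / t ^ 2) (by positivity)]

lemma integrableOn_Ioi_comp_id_sub_const_div (hk : 0 < k) {g : ℝ → E} (hg : Integrable g) :
    IntegrableOn (fun t => g (t - k / t)) (Ioi 0) := by
  have hbdd : ∀ t : ℝ, ‖(1 + k / t ^ 2)⁻¹‖ ≤ 1 := fun t => by
    rw [norm_inv, Real.norm_of_nonneg (by positivity)]
    exact inv_le_one_of_one_le₀ (le_add_of_nonneg_right (by positivity))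
  refine IntegrableOn.congr_fun ((integrableOn_Ioi_smul_comp_id_sub_const_div hk hg).bdd_smul 1
    (Measurable.aestronglyMeasurable (by fun_prop)) (Filter.Eventually.of_forall hbdd))
    (fun t _ => ?_) measurableSet_Ioi
  simp only [Pi.smul_apply']
  exact inv_smul_smul₀ (by positivity) _

theorem integral_Ioi_comp_id_sub_const_div_of_even {f : ℝ → ℝ} (hf : Integrable f)
    (heven : ∀ x, f (-x) = f x) (hk : 0 ≤ k) :
    ∫ t in Ioi 0, f (t - k / t) = (∫ x, f x) / 2 := by
  rcases hk.eq_or_lt with rfl | hk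
  · have hcomp : ∫ x, f |x| = ∫ x, f x := integral_congr_ae <| Filter.Eventually.of_forall
      fun x => by rcases abs_choice x with h | h <;> simp only [h, heven]
    rw [← hcomp, integral_comp_abs]
    simp
  have hI := integrableOn_Ioi_comp_id_sub_const_div hk hf
  -- `t ↦ k / t` sends `t - k / t` to its negative, and `f` is even
  have hswap : ∫ t in Ioi 0, (k / t ^ 2) • f (t - k / t) = ∫ t in Ioi 0, f (t - k / t) := by
    conv_rhs => rw [← integral_Ioi_comp_const_div hk]
    refine setIntegral_congr_fun measurableSet_Ioi fun t _ => ?_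
    rw [div_div_cancel₀ hk.ne', ← heven, neg_sub]
  have hJ : IntegrableOn (fun t => (k / t ^ 2) • f (t - k / t)) (Ioi 0) :=
    ((integrableOn_Ioi_smul_comp_id_sub_const_div hk hf).sub hI).congr_fun
      (fun t _ => by simp only [Pi.sub_apply, add_smul, one_smul, add_sub_cancel_left])
      measurableSet_Ioi
  rw [integral_eq_integral_Ioi_smul_comp_id_sub_const_div hk]
  simp only [add_smul, one_smul]
  rw [integral_add hI hJ, hswap]
  ring

end CauchySchlomilch

lemma integral_Ioi_exp_neg_mul_sq_id_sub_const_div {a k : ℝ} (ha : 0 < a) (hk : 0 ≤ k) :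
    ∫ t in Ioi 0, exp (-a * (t - k / t) ^ 2) = √(π / a) / 2 := by
  rw [integral_Ioi_comp_id_sub_const_div_of_even (f := fun x => exp (-a * x ^ 2))
    (integrable_exp_neg_mul_sq ha) (fun x => by simp) hk, integral_gaussian]

lemma integral_Ioi_comp_sq {E : Type*} [NormedAddCommGroup E] [NormedSpace ℝ E] (g : ℝ → E) :
    ∫ u in Ioi 0, (2 * u) • g (u ^ 2) = ∫ τ in Ioi 0, g τ := by
  convert integral_comp_rpow_Ioi_of_pos (g := g) two_pos using 4 <;> norm_num

lemma two_mul_mul_normal_mixture_integrand_sq {lam : ℝ} (hlam : 0 < lam) (b : ℝ) {u : ℝ}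
    (hu : 0 < u) :
    2 * u * ((2 * π * u ^ 2) ^ (-(1:ℝ)/2) * exp (-b ^ 2 / (2 * u ^ 2))
      * (lam ^ 2 / 2) * exp (-lam ^ 2 * u ^ 2 / 2))
      = lam ^ 2 / √(2 * π) * exp (-lam * |b|)
        * exp (-(lam ^ 2 / 2) * (u - |b| / lam / u) ^ 2) := by
  have hrpow : (2 * π * u ^ 2) ^ (-(1:ℝ)/2) = (√(2 * π) * u)⁻¹ := by
    rw [neg_div, rpow_neg (by positivity), ← sqrt_eq_rpow, sqrt_mul (by positivity),
      sqrt_sq hu.le]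
  have hexp : -b ^ 2 / (2 * u ^ 2) + -lam ^ 2 * u ^ 2 / 2
      = -lam * |b| + -(lam ^ 2 / 2) * (u - |b| / lam / u) ^ 2 := by
    rw [← sq_abs b]
    field_simp
    ring
  calc _ = lam ^ 2 / √(2 * π) * (exp (-b ^ 2 / (2 * u ^ 2)) * exp (-lam ^ 2 * u ^ 2 / 2)) := by
        rw [hrpow]
        field_simp
    _ = _ := by rw [← exp_add, hexp, exp_add, mul_assoc]

/-- Andrews–Mallows representation: the Laplace density is a scale mixture of normals with
exponential mixing: `(λ/2) e^{−λ|b|} = ∫₀^∞ (2πτ)^{−1/2} e^{−b²/(2τ)} (λ²/2) e^{−λ²τ/2} dτ`. -/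
theorem laplace_scale_mixture_of_normals {lam : ℝ} (hlam : 0 < lam) (b : ℝ) :
    lam / 2 * Real.exp (-lam * |b|)
      = ∫ τ in Set.Ioi (0:ℝ),
          (2 * π * τ) ^ (-(1:ℝ)/2) * Real.exp (-b ^ 2 / (2 * τ))
            * (lam ^ 2 / 2) * Real.exp (-lam ^ 2 * τ / 2) := by
  rw [← integral_Ioi_comp_sq, setIntegral_congr_fun measurableSet_Ioi fun u hu =>
    (smul_eq_mul _ _).trans (two_mul_mul_normal_mixture_integrand_sq hlam b hu),
    integral_const_mul, integral_Ioi_exp_neg_mul_sq_id_sub_const_div (by positivity)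
      (by positivity), show π / (lam ^ 2 / 2) = (2 * π) / lam ^ 2 by ring,
    sqrt_div' _ (sq_nonneg lam), sqrt_sq hlam.le]
  field_simp
end
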